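/- arXiv:2604.14050 — 9 statements merged into one kernel-verified Lean document; each statement's English description precedes it below -/
import Mathlib

section
/- For every integer n ≥ 3 there exists a real n×2 matrix A with orthonormal columns (AᵀA = I₂) such that every 2×2 submatrix A_{ij} formed by two distinct rows of A satisfies σ₂(A_{ij}) ≤ 1/√n, i.e., every invertible 2×2 submatrix has spectral norm of its inverse at least √n; hence the bound √n in the submatrix-inverse theorem is tight. -/
/-!
For a 2×2 matrix `B`, `sigma2 B ^ 2` is the smaller root of `t² - tr(BᵀB) t + det(B)²`, so
`sigma2 B ≤ √x` as soon as this polynomial is nonpositive at `x`. For the rows `u, v` of `B` this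
reads `(x - ‖u‖²)(x - ‖v‖²) ≤ ⟪u, v⟫²`, by Lagrange's identity `det(B)² = ‖u‖²‖v‖² - ⟪u, v⟫²`.

Take `n - 2` rows `(a, 0)` and the two rows `(b, ±c)`, with `a² = (n-1)/(n(n-2))`, `b² = 1/(2n)`,
`c² = 1/2`. The columns are orthonormal, and at `x = 1/n` the inequality holds for every pair of
rows, with equality whenever one of the last two rows is involved.
-/

open Matrix Finset

/-- Euclidean norm on ℝ². -/
noncomputable def enorm2 (v : Fin 2 → ℝ) : ℝ := Real.sqrt (v 0 ^ 2 + v 1 ^ 2)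

/-- Euclidean inner product on ℝ². -/
def inner2 (u v : Fin 2 → ℝ) : ℝ := u 0 * v 0 + u 1 * v 1

/-- The square of a vector in ℝ², defined as for complex numbers:
`(ξ, η) ↦ (ξ² − η², 2ξη)`. -/
def vsq (v : Fin 2 → ℝ) : Fin 2 → ℝ := ![v 0 ^ 2 - v 1 ^ 2, 2 * v 0 * v 1]

/-- The largest singular value of a 2×2 real matrix (explicit closed form:
the singular values squared are the eigenvalues of `BᵀB`, which has trace
`tr(BᵀB)` and determinant `det(B)²`). -/
noncomputable def sigma1 (B : Matrix (Fin 2) (Fin 2) ℝ) : ℝ :=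
  Real.sqrt (((Bᵀ * B).trace + Real.sqrt ((Bᵀ * B).trace ^ 2 - 4 * B.det ^ 2)) / 2)

/-- The smallest singular value of a 2×2 real matrix. -/
noncomputable def sigma2 (B : Matrix (Fin 2) (Fin 2) ℝ) : ℝ :=
  Real.sqrt (((Bᵀ * B).trace - Real.sqrt ((Bᵀ * B).trace ^ 2 - 4 * B.det ^ 2)) / 2)

/-- The 2×2 submatrix of an n×2 matrix formed by rows `i` and `j`. -/
def rowPair {n : ℕ} (A : Matrix (Fin n) (Fin 2) ℝ) (i j : Fin n) :
    Matrix (Fin 2) (Fin 2) ℝ :=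
  !![A i 0, A i 1; A j 0, A j 1]

lemma half_sub_sqrt_discrim_le {T P x : ℝ} (h : x ^ 2 - T * x + P ≤ 0) :
    (T - √(T ^ 2 - 4 * P)) / 2 ≤ x := by
  have : |T - 2 * x| ≤ √(T ^ 2 - 4 * P) := Real.abs_le_sqrt (by nlinarith)
  linarith [le_abs_self (T - 2 * x)]

lemma sigma2_le_sqrt_of_charpoly_nonpos (B : Matrix (Fin 2) (Fin 2) ℝ) {x : ℝ}
    (h : x ^ 2 - (Bᵀ * B).trace * x + B.det ^ 2 ≤ 0) : sigma2 B ≤ √x :=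
  Real.sqrt_le_sqrt (half_sub_sqrt_discrim_le h)

section rowPair

variable {n : ℕ} (A : Matrix (Fin n) (Fin 2) ℝ) (i j : Fin n)

lemma trace_transpose_mul_rowPair :
    ((rowPair A i j)ᵀ * rowPair A i j).trace = inner2 (A i) (A i) + inner2 (A j) (A j) := by
  simp [rowPair, inner2, Matrix.trace_fin_two, Matrix.mul_apply, Fin.sum_univ_two]
  ring

lemma det_rowPair_sq :
    (rowPair A i j).det ^ 2 =
      inner2 (A i) (A i) * inner2 (A j) (A j) - inner2 (A i) (A j) ^ 2 := by
  rw [rowPair, Matrix.det_fin_two_of, inner2, inner2, inner2]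
  ring

lemma sigma2_rowPair_le_sqrt {x : ℝ}
    (h : (x - inner2 (A i) (A i)) * (x - inner2 (A j) (A j)) ≤ inner2 (A i) (A j) ^ 2) :
    sigma2 (rowPair A i j) ≤ √x := by
  apply sigma2_le_sqrt_of_charpoly_nonpos
  rw [trace_transpose_mul_rowPair, det_rowPair_sq]
  linarith

end rowPair

def stackedMatrix (m : ℕ) (a b c : ℝ) : Matrix (Fin (m + 2)) (Fin 2) ℝ :=
  Matrix.of (Fin.append (fun _ : Fin m => ![a, 0]) ![![b, c], ![b, -c]])

lemma transpose_mul_self_stackedMatrix {m : ℕ} {a b c : ℝ} (hab : m * a ^ 2 + 2 * b ^ 2 = 1)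
    (hc : 2 * c ^ 2 = 1) : (stackedMatrix m a b c)ᵀ * stackedMatrix m a b c = 1 := by
  ext k l
  fin_cases k <;> fin_cases l <;>
    simp [stackedMatrix, Matrix.mul_apply, Fin.sum_univ_add, Fin.sum_univ_two] <;>
    linarith

lemma sigma2_rowPair_stackedMatrix_le {m : ℕ} (hm : 0 < m) {a b c : ℝ}
    (ha : a ^ 2 = (m + 1) / ((m + 2) * m)) (hb : b ^ 2 = 1 / (2 * (m + 2))) (hc : c ^ 2 = 1 / 2)
    {i j : Fin (m + 2)} (hij : i ≠ j) :
    sigma2 (rowPair (stackedMatrix m a b c) i j) ≤ √((m : ℝ) + 2)⁻¹ := by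
  have hm' : (0 : ℝ) < m := Nat.cast_pos.mpr hm
  apply sigma2_rowPair_le_sqrt
  induction i using Fin.addCases <;> induction j using Fin.addCases
  case left.left =>
    simp [stackedMatrix, inner2, ← sq, ha]
    field_simp
    nlinarith
  case left.right k l =>
    fin_cases l <;> apply le_of_eq <;>
      simp [stackedMatrix, inner2, ← sq, mul_pow, ha, hb, hc] <;> field_simp <;> ring
  case right.left l k =>
    fin_cases l <;> apply le_of_eq <;>
      simp [stackedMatrix, inner2, ← sq, mul_pow, ha, hb, hc] <;> field_simp <;> ring
  case right.right l l' =>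
    fin_cases l <;> fin_cases l' <;> simp [stackedMatrix, inner2, ← sq, hb, hc] at hij ⊢ <;>
      apply le_of_eq <;> field_simp <;> ring

/-- The bound `√n` is tight: for every `n ≥ 3` there is a matrix
with orthonormal columns all of whose 2×2 submatrices have smallest singular
value at most `1/√n`. -/
theorem submatrix_inverse_bound_tight (n : ℕ) (hn : 3 ≤ n) :
    ∃ A : Matrix (Fin n) (Fin 2) ℝ, Aᵀ * A = 1 ∧
      ∀ i j : Fin n, i ≠ j → sigma2 (rowPair A i j) ≤ 1 / Real.sqrt n := by
  obtain ⟨m, rfl⟩ : ∃ m, n = m + 2 := ⟨n - 2, by omega⟩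
  have hm : 0 < m := by omega
  obtain ⟨a, ha⟩ : ∃ a : ℝ, a ^ 2 = (m + 1) / ((m + 2) * m) :=
    ⟨_, Real.sq_sqrt (by positivity)⟩
  obtain ⟨b, hb⟩ : ∃ b : ℝ, b ^ 2 = 1 / (2 * (m + 2)) := ⟨_, Real.sq_sqrt (by positivity)⟩
  obtain ⟨c, hc⟩ : ∃ c : ℝ, c ^ 2 = 1 / 2 := ⟨_, Real.sq_sqrt (by norm_num)⟩
  refine ⟨stackedMatrix m a b c, transpose_mul_self_stackedMatrix ?_ ?_, fun i j hij => ?_⟩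
  · have : (0 : ℝ) < m := Nat.cast_pos.mpr hm
    rw [ha, hb]
    field_simp
    ring
  · rw [hc]
    norm_num
  · rw [one_div, ← Real.sqrt_inv, Nat.cast_add, Nat.cast_two]
    exact sigma2_rowPair_stackedMatrix_le hm ha hb hc hij
end

section
/- Let n ≥ 3, let A be a real n×2 matrix with orthonormal columns (AᵀA = I₂), and suppose the squares of the rows of A take exactly three distinct values, occurring with multiplicities p, q, r > 0 (p + q + r = n) and having Euclidean magnitudes 1/(2n) + 1/(2p), 1/(2n) + 1/(2q) and 1/(2n) + 1/(2r) respectively. Then every 2×2 submatrix A_{ij} formed by two distinct rows of A satisfies σ₂(A_{ij}) ≤ 1/√n, and this bound is attained for some pair i ≠ j. -/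
open Matrix Finset

/-!
Identify ℝ² with ℂ, so that `vsq` is complex squaring. For rows `a, b` of `A` the singular
values `s₁ ≥ s₂` of the pair satisfy `s₁² + s₂² = |a|² + |b|²` and `s₁² − s₂² = |a² + b²|`, hence
`2 s₂² = |a²| + |b²| − |a² + b²|`. Orthonormality of the columns says `∑ aᵢ² = 0`, i.e.
`p x + q y + r z = 0` for the three cluster values. With the prescribed magnitudes, expanding
`|p x + q y|² = |r z|²` gives `|x + y| = |x| + |y| − 2/n` (and likewise for the other pairs), so
`s₂ = 1/√n` for rows in different clusters, while `s₂ = 0` for rows in the same cluster.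
-/

lemma enorm2_eq_norm (v : Fin 2 → ℝ) : enorm2 v = ‖WithLp.toLp 2 v‖ := by
  simp [enorm2, EuclideanSpace.norm_eq, Fin.sum_univ_two]

lemma enorm2_vsq (v : Fin 2 → ℝ) : enorm2 (vsq v) = v 0 ^ 2 + v 1 ^ 2 := by
  rw [enorm2, vsq, Matrix.cons_val_zero, Matrix.cons_val_one, Matrix.cons_val_zero,
    show (v 0 ^ 2 - v 1 ^ 2) ^ 2 + (2 * v 0 * v 1) ^ 2 = (v 0 ^ 2 + v 1 ^ 2) ^ 2 by ring]
  exact Real.sqrt_sq (by positivity)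

lemma sigma2_of_rows (u v : Fin 2 → ℝ) :
    sigma2 !![u 0, u 1; v 0, v 1] =
      √((enorm2 (vsq u) + enorm2 (vsq v) - enorm2 (vsq u + vsq v)) / 2) := by
  set B := !![u 0, u 1; v 0, v 1]
  have htrace : (Bᵀ * B).trace = (u 0 ^ 2 + u 1 ^ 2) + (v 0 ^ 2 + v 1 ^ 2) := by
    simp only [B, trace, diag_apply, Matrix.mul_apply, transpose_apply, of_apply, cons_val',
      cons_val_fin_one, Fin.sum_univ_two, cons_val_zero, cons_val_one]
    ring
  have hdisc : (Bᵀ * B).trace ^ 2 - 4 * B.det ^ 2 =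
      (vsq u + vsq v) 0 ^ 2 + (vsq u + vsq v) 1 ^ 2 := by
    simp only [htrace, B, det_fin_two_of, vsq, Pi.add_apply, cons_val_zero, cons_val_one]
    ring
  rw [sigma2, hdisc, htrace, enorm2_vsq, enorm2_vsq, enorm2]

lemma sum_vsq_eq_zero {ι : Type*} [Fintype ι] {A : Matrix ι (Fin 2) ℝ} (hA : Aᵀ * A = 1) :
    ∑ i, vsq (A i) = 0 := by
  have hgram (k l : Fin 2) : ∑ i, A i k * A i l = if k = l then 1 else 0 := by
    simpa [Matrix.mul_apply, Matrix.one_apply] using congrFun (congrFun hA k) l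
  ext k
  fin_cases k
  · simp [vsq, Finset.sum_sub_distrib, sq, hgram]
  · simp [vsq, mul_assoc, ← Finset.mul_sum, hgram 0 1]

lemma sum_eq_of_forall_eq_or_eq_or_eq {ι M : Type*} [Fintype ι] [AddCommMonoid M]
    [DecidableEq M] {g : ι → M} {x y z : M} (hxy : x ≠ y) (hxz : x ≠ z) (hyz : y ≠ z)
    (hg : ∀ i, g i = x ∨ g i = y ∨ g i = z) :
    ∑ i, g i = #{i | g i = x} • x + #{i | g i = y} • y + #{i | g i = z} • z := by
  have hfiber (w : M) : ∑ i with g i = w, g i = #{i | g i = w} • w := by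
    rw [Finset.sum_congr rfl fun i hi => (Finset.mem_filter.1 hi).2, Finset.sum_const]
  rw [← Finset.sum_fiberwise_of_maps_to (t := {x, y, z}) (g := g) (by simpa using hg),
    Finset.sum_insert (by simp [hxy, hxz]), Finset.sum_pair hyz, hfiber, hfiber, hfiber,
    add_assoc]

lemma norm_add_eq_of_smul_add_smul_add_smul_eq_zero {E : Type*} [NormedAddCommGroup E]
    [InnerProductSpace ℝ E] {P Q R N : ℝ} (hP : 0 < P) (hQ : 0 < Q) (hR : 0 < R)
    (hN : P + Q + R = N) {x y z : E} (hsum : P • x + Q • y + R • z = 0)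
    (hx : ‖x‖ = 1 / (2 * N) + 1 / (2 * P)) (hy : ‖y‖ = 1 / (2 * N) + 1 / (2 * Q))
    (hz : ‖z‖ = 1 / (2 * N) + 1 / (2 * R)) :
    ‖x + y‖ = ‖x‖ + ‖y‖ - 2 / N := by
  have hPN : P ≤ N := by linarith
  have hQN : Q ≤ N := by linarith
  have hN0 : 0 < N := by linarith
  have hRz : ‖P • x + Q • y‖ = R * ‖z‖ := by
    rw [eq_neg_of_add_eq_zero_left hsum, norm_neg, norm_smul, Real.norm_of_nonneg hR.le]
  have hinner : 2 * P * Q * inner ℝ x y = (R * ‖z‖) ^ 2 - (P * ‖x‖) ^ 2 - (Q * ‖y‖) ^ 2 := by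
    rw [← hRz, norm_add_sq_real, norm_smul, norm_smul, real_inner_smul_left,
      real_inner_smul_right, Real.norm_of_nonneg hP.le, Real.norm_of_nonneg hQ.le]
    ring
  have hnonneg : 0 ≤ ‖x‖ + ‖y‖ - 2 / N := by
    rw [hx, hy]
    have : 1 / (2 * N) ≤ 1 / (2 * P) := by gcongr
    have : 1 / (2 * N) ≤ 1 / (2 * Q) := by gcongr
    have : 2 / N = 1 / (2 * N) * 4 := by field_simp; ring
    linarith
  rw [← sq_eq_sq₀ (norm_nonneg _) hnonneg, norm_add_sq_real]
  rw [hx, hy, hz] at hinner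
  rw [hx, hy]
  subst hN
  field_simp at hinner ⊢
  linear_combination P * Q * hinner

lemma enorm2_add_of_smul_add_smul_add_smul_eq_zero {P Q R N : ℝ} (hP : 0 < P) (hQ : 0 < Q)
    (hR : 0 < R) (hN : P + Q + R = N) {x y z : Fin 2 → ℝ} (hsum : P • x + Q • y + R • z = 0)
    (hx : enorm2 x = 1 / (2 * N) + 1 / (2 * P)) (hy : enorm2 y = 1 / (2 * N) + 1 / (2 * Q))
    (hz : enorm2 z = 1 / (2 * N) + 1 / (2 * R)) :
    enorm2 (x + y) = enorm2 x + enorm2 y - 2 / N := by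
  simp only [enorm2_eq_norm, WithLp.toLp_add] at *
  refine norm_add_eq_of_smul_add_smul_add_smul_eq_zero hP hQ hR hN ?_ hx hy hz
  simpa using congrArg (WithLp.toLp 2) hsum

lemma enorm2_add_of_mem_of_ne {P Q R N : ℝ} (hP : 0 < P) (hQ : 0 < Q) (hR : 0 < R)
    (hN : P + Q + R = N) {x y z : Fin 2 → ℝ} (hsum : P • x + Q • y + R • z = 0)
    (hx : enorm2 x = 1 / (2 * N) + 1 / (2 * P)) (hy : enorm2 y = 1 / (2 * N) + 1 / (2 * Q))
    (hz : enorm2 z = 1 / (2 * N) + 1 / (2 * R)) {u v : Fin 2 → ℝ}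
    (hu : u = x ∨ u = y ∨ u = z) (hv : v = x ∨ v = y ∨ v = z) (huv : u ≠ v) :
    enorm2 (u + v) = enorm2 u + enorm2 v - 2 / N := by
  have hxy := enorm2_add_of_smul_add_smul_add_smul_eq_zero hP hQ hR hN hsum hx hy hz
  have hxz := enorm2_add_of_smul_add_smul_add_smul_eq_zero hP hR hQ (by linarith)
    (by rw [← hsum]; abel) hx hz hy
  have hyz := enorm2_add_of_smul_add_smul_add_smul_eq_zero hQ hR hP (by linarith)
    (by rw [← hsum]; abel) hy hz hx
  rcases hu with rfl | rfl | rfl <;> rcases hv with rfl | rfl | rfl <;>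
    first
    | exact absurd rfl huv
    | assumption
    | rw [add_comm, add_comm (enorm2 _)]; assumption

lemma sigma2_of_rows_of_vsq_eq {u v : Fin 2 → ℝ} (h : vsq u = vsq v) :
    sigma2 !![u 0, u 1; v 0, v 1] = 0 := by
  rw [sigma2_of_rows, h, ← two_smul ℝ (vsq v)]
  simp [enorm2_eq_norm, norm_smul, two_mul]

lemma sigma2_of_rows_of_enorm2_add {u v : Fin 2 → ℝ} {N : ℝ}
    (h : enorm2 (vsq u + vsq v) = enorm2 (vsq u) + enorm2 (vsq v) - 2 / N) :
    sigma2 !![u 0, u 1; v 0, v 1] = 1 / √N := by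
  rw [sigma2_of_rows, h, one_div, ← Real.sqrt_inv]
  ring_nf

theorem cluster_structure_sufficient_general (n : ℕ)
    (A : Matrix (Fin n) (Fin 2) ℝ) (hA : Aᵀ * A = 1)
    (hcluster :
      ∃ p q r : ℕ, 0 < p ∧ 0 < q ∧ 0 < r ∧ p + q + r = n ∧
        ∃ x y z : Fin 2 → ℝ, x ≠ y ∧ x ≠ z ∧ y ≠ z ∧
          (∀ i : Fin n, vsq (A i) = x ∨ vsq (A i) = y ∨ vsq (A i) = z) ∧
          (Finset.univ.filter (fun i : Fin n => vsq (A i) = x)).card = p ∧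
          (Finset.univ.filter (fun i : Fin n => vsq (A i) = y)).card = q ∧
          (Finset.univ.filter (fun i : Fin n => vsq (A i) = z)).card = r ∧
          enorm2 x = 1 / (2 * n) + 1 / (2 * p) ∧
          enorm2 y = 1 / (2 * n) + 1 / (2 * q) ∧
          enorm2 z = 1 / (2 * n) + 1 / (2 * r)
    ) :
    (∀ i j : Fin n, i ≠ j → sigma2 (rowPair A i j) ≤ 1 / Real.sqrt n) ∧
      ∃ i j : Fin n, i ≠ j ∧ sigma2 (rowPair A i j) = 1 / Real.sqrt n := by
  obtain ⟨p, q, r, hp, hq, hr, hpqr, x, y, z, hxy, hxz, hyz, hval, hcx, hcy, hcz, hx, hy, hz⟩ :=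
    hcluster
  have hsum : (p : ℝ) • x + (q : ℝ) • y + (r : ℝ) • z = 0 := by
    simp only [Nat.cast_smul_eq_nsmul, ← hcx, ← hcy, ← hcz,
      ← sum_eq_of_forall_eq_or_eq_or_eq hxy hxz hyz hval, sum_vsq_eq_zero hA]
  have hcross (i j : Fin n) (h : vsq (A i) ≠ vsq (A j)) :
      sigma2 (rowPair A i j) = 1 / √n :=
    sigma2_of_rows_of_enorm2_add <| enorm2_add_of_mem_of_ne (by positivity) (by positivity)
      (by positivity) (by exact_mod_cast hpqr) hsum hx hy hz (hval i) (hval j) h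
  refine ⟨fun i j _ => ?_, ?_⟩
  · by_cases h : vsq (A i) = vsq (A j)
    · rw [rowPair, sigma2_of_rows_of_vsq_eq h]
      positivity
    · exact (hcross i j h).le
  · obtain ⟨i, -, hi⟩ := Finset.filter_nonempty_iff.1 (Finset.card_pos.1 (hcx ▸ hp))
    obtain ⟨j, -, hj⟩ := Finset.filter_nonempty_iff.1 (Finset.card_pos.1 (hcy ▸ hq))
    have hij : vsq (A i) ≠ vsq (A j) := hi ▸ hj ▸ hxy
    exact ⟨i, j, fun h => hij (h ▸ rfl), hcross i j hij⟩

/-- sufficiency of the three-cluster structure: every 2×2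
submatrix has `σ₂ ≤ 1/√n`, and the bound is attained. -/
theorem cluster_structure_sufficient (n : ℕ) (hn : 3 ≤ n)
    (A : Matrix (Fin n) (Fin 2) ℝ) (hA : Aᵀ * A = 1)
    (hcluster :
      ∃ p q r : ℕ, 0 < p ∧ 0 < q ∧ 0 < r ∧ p + q + r = n ∧
        ∃ x y z : Fin 2 → ℝ, x ≠ y ∧ x ≠ z ∧ y ≠ z ∧
          (∀ i : Fin n, vsq (A i) = x ∨ vsq (A i) = y ∨ vsq (A i) = z) ∧
          (Finset.univ.filter (fun i : Fin n => vsq (A i) = x)).card = p ∧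
          (Finset.univ.filter (fun i : Fin n => vsq (A i) = y)).card = q ∧
          (Finset.univ.filter (fun i : Fin n => vsq (A i) = z)).card = r ∧
          enorm2 x = 1 / (2 * n) + 1 / (2 * p) ∧
          enorm2 y = 1 / (2 * n) + 1 / (2 * q) ∧
          enorm2 z = 1 / (2 * n) + 1 / (2 * r)
    ) :
    (∀ i j : Fin n, i ≠ j → sigma2 (rowPair A i j) ≤ 1 / Real.sqrt n) ∧
      ∃ i j : Fin n, i ≠ j ∧ sigma2 (rowPair A i j) = 1 / Real.sqrt n :=
  cluster_structure_sufficient_general n A hA hcluster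
end

section
/- For every integer n ≥ 3 there exist vectors w₁, …, wₙ ∈ ℝ² with ∑ᵢ wᵢ = 0 and ∑ᵢ |wᵢ| = 2 such that max over pairs i ≠ j of (|wᵢ| + |wⱼ| − |wᵢ + wⱼ|) = 2/n; hence the lower bound 2/n for planar polygons of perimeter 2 is tight. -/
/-!
Take an isosceles triangle with legs of length `(n + 1) / (2n)` and base `(n - 1) / n`, hence
perimeter 2, and cut its base into `n - 2` equal edges. Edges along the base are parallel and have
defect `|x| + |y| - |x + y| = 0`; the two legs have defect `2 (n + 1) / (2n) - (n - 1) / n = 2 / n`;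
and the leg length is exactly the one for which a leg and a base edge also have defect `2 / n`.
-/

open Matrix Finset

noncomputable def triangleDefect (x y : Fin 2 → ℝ) : ℝ :=
  enorm2 x + enorm2 y - enorm2 (x + y)

lemma enorm2_nonneg (v : Fin 2 → ℝ) : 0 ≤ enorm2 v := Real.sqrt_nonneg _

lemma enorm2_eq_of_sq_add_sq {v : Fin 2 → ℝ} {c : ℝ} (hc : 0 ≤ c)
    (h : v 0 ^ 2 + v 1 ^ 2 = c ^ 2) : enorm2 v = c := by
  rw [enorm2, h, Real.sqrt_sq hc]

lemma enorm2_add_self (v : Fin 2 → ℝ) : enorm2 (v + v) = 2 * enorm2 v := by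
  have hv : enorm2 v ^ 2 = v 0 ^ 2 + v 1 ^ 2 := Real.sq_sqrt (by positivity)
  refine enorm2_eq_of_sq_add_sq (by linarith [enorm2_nonneg v]) ?_
  simp only [Pi.add_apply]
  linear_combination (-4 : ℝ) * hv

lemma triangleDefect_comm (x y : Fin 2 → ℝ) : triangleDefect x y = triangleDefect y x := by
  rw [triangleDefect, triangleDefect, add_comm x, add_comm (enorm2 x)]

lemma triangleDefect_self (v : Fin 2 → ℝ) : triangleDefect v v = 0 := by
  rw [triangleDefect, enorm2_add_self]; ring

section IsoscelesTriangle

/-! `N` stands for the number of edges: the base `(N - 1) / N` is cut into `N - 2` pieces, and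
`σ = ±1` selects one of the two legs. -/

noncomputable def baseEdge (N : ℝ) : Fin 2 → ℝ := ![(N - 1) / ((N - 2) * N), 0]

noncomputable def legEdge (N σ : ℝ) : Fin 2 → ℝ := ![-(N - 1) / (2 * N), σ * √(1 / N)]

variable {N σ : ℝ}

lemma enorm2_baseEdge (hN : 2 < N) : enorm2 (baseEdge N) = (N - 1) / ((N - 2) * N) := by
  refine enorm2_eq_of_sq_add_sq (div_nonneg (by linarith) (by nlinarith)) ?_
  simp [baseEdge]

lemma enorm2_legEdge (hN : 2 < N) (hσ : σ ^ 2 = 1) :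
    enorm2 (legEdge N σ) = (N + 1) / (2 * N) := by
  have ht : √(1 / N) ^ 2 = 1 / N := Real.sq_sqrt (by positivity)
  refine enorm2_eq_of_sq_add_sq (by positivity) ?_
  simp only [legEdge, cons_val_zero, cons_val_one, mul_pow, hσ, ht]
  field_simp
  ring

lemma triangleDefect_baseEdge_legEdge (hN : 2 < N) (hσ : σ ^ 2 = 1) :
    triangleDefect (baseEdge N) (legEdge N σ) = 2 / N := by
  have hN2 : N - 2 ≠ 0 := by linarith
  have ht : √(1 / N) ^ 2 = 1 / N := Real.sq_sqrt (by positivity)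
  have hsum : enorm2 (baseEdge N + legEdge N σ) = (N ^ 2 - 3 * N + 4) / (2 * N * (N - 2)) := by
    refine enorm2_eq_of_sq_add_sq (div_nonneg (by nlinarith) (by nlinarith)) ?_
    simp only [baseEdge, legEdge, Pi.add_apply, cons_val_zero, cons_val_one, zero_add,
      mul_pow, hσ, ht]
    field_simp
    ring
  rw [triangleDefect, enorm2_baseEdge hN, enorm2_legEdge hN hσ, hsum]
  field_simp
  ring

lemma triangleDefect_legEdge_legEdge_neg (hN : 2 < N) :
    triangleDefect (legEdge N 1) (legEdge N (-1)) = 2 / N := by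
  have hsum : enorm2 (legEdge N 1 + legEdge N (-1)) = (N - 1) / N := by
    refine enorm2_eq_of_sq_add_sq (div_nonneg (by linarith) (by linarith)) ?_
    simp only [legEdge, Pi.add_apply, cons_val_zero, cons_val_one]
    field_simp
    ring
  rw [triangleDefect, enorm2_legEdge hN (by norm_num), enorm2_legEdge hN (by norm_num), hsum]
  field_simp
  ring

lemma legEdge_add_legEdge_neg_add_smul_baseEdge (hN : 2 < N) :
    legEdge N 1 + (legEdge N (-1) + (N - 2) • baseEdge N) = 0 := by
  have : N - 2 ≠ 0 := by linarith
  ext k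
  fin_cases k
  · simp only [Fin.zero_eta, legEdge, baseEdge, Pi.add_apply, Pi.smul_apply, cons_val_zero,
      smul_eq_mul, Pi.zero_apply]
    field_simp
    ring
  · simp [legEdge, baseEdge]

lemma enorm2_legEdge_add_enorm2_legEdge_neg_add (hN : 2 < N) :
    enorm2 (legEdge N 1) + (enorm2 (legEdge N (-1)) + (N - 2) * enorm2 (baseEdge N)) = 2 := by
  have : N - 2 ≠ 0 := by linarith
  rw [enorm2_legEdge hN (one_pow 2), enorm2_legEdge hN neg_one_sq, enorm2_baseEdge hN]
  field_simp
  ring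

def isoscelesEdges (N : ℝ) : Set (Fin 2 → ℝ) := {legEdge N 1, legEdge N (-1), baseEdge N}

lemma triangleDefect_le_of_mem_isoscelesEdges (hN : 2 < N) {x y : Fin 2 → ℝ}
    (hx : x ∈ isoscelesEdges N) (hy : y ∈ isoscelesEdges N) :
    triangleDefect x y ≤ 2 / N := by
  have h2N : (0 : ℝ) ≤ 2 / N := div_nonneg zero_le_two (by linarith)
  rcases hx with rfl | rfl | rfl <;> rcases hy with rfl | rfl | rfl <;>
    first
    | rw [triangleDefect_self]; exact h2N
    | rw [triangleDefect_legEdge_legEdge_neg hN]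
    | rw [triangleDefect_comm, triangleDefect_legEdge_legEdge_neg hN]
    | rw [triangleDefect_baseEdge_legEdge hN (by norm_num)]
    | rw [triangleDefect_comm, triangleDefect_baseEdge_legEdge hN (by norm_num)]

end IsoscelesTriangle

section IsoscelesPolygon

noncomputable def isoscelesPolygon (m : ℕ) : Fin (m + 2) → Fin 2 → ℝ :=
  vecCons (legEdge (m + 2 : ℕ) 1) <|
    vecCons (legEdge (m + 2 : ℕ) (-1)) fun _ => baseEdge (m + 2 : ℕ)

variable {m : ℕ}

lemma natCast_eq_sub_two : (m : ℝ) = (m + 2 : ℕ) - 2 := by push_cast; ring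

lemma two_lt_natCast_add_two (hm : 0 < m) : (2 : ℝ) < (m + 2 : ℕ) := by
  push_cast
  linarith [show (0 : ℝ) < m by exact_mod_cast hm]

lemma sum_isoscelesPolygon (hm : 0 < m) : ∑ i, isoscelesPolygon m i = 0 := by
  simp only [isoscelesPolygon, Fin.sum_univ_succ, cons_val_zero, cons_val_succ, sum_const,
    card_univ, Fintype.card_fin, ← Nat.cast_smul_eq_nsmul ℝ]
  simpa only [← natCast_eq_sub_two] using
    legEdge_add_legEdge_neg_add_smul_baseEdge (two_lt_natCast_add_two hm)

lemma sum_enorm2_isoscelesPolygon (hm : 0 < m) : ∑ i, enorm2 (isoscelesPolygon m i) = 2 := by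
  simp only [isoscelesPolygon, Fin.sum_univ_succ, cons_val_zero, cons_val_succ, sum_const,
    card_univ, Fintype.card_fin, nsmul_eq_mul]
  simpa only [← natCast_eq_sub_two] using
    enorm2_legEdge_add_enorm2_legEdge_neg_add (two_lt_natCast_add_two hm)

lemma isoscelesPolygon_mem_isoscelesEdges (i : Fin (m + 2)) :
    isoscelesPolygon m i ∈ isoscelesEdges (m + 2 : ℕ) := by
  refine Fin.cases ?_ (Fin.cases ?_ fun _ => ?_) i <;> simp [isoscelesPolygon, isoscelesEdges]

end IsoscelesPolygon

/-- the bound `2/n` for planar polygons of perimeter 2 is tight. -/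
theorem polygon_bound_tight (n : ℕ) (hn : 3 ≤ n) :
    ∃ w : Fin n → Fin 2 → ℝ, (∑ i, w i = 0) ∧ (∑ i, enorm2 (w i) = 2) ∧
      (∀ i j : Fin n, i ≠ j →
        enorm2 (w i) + enorm2 (w j) - enorm2 (w i + w j) ≤ 2 / n) ∧
      (∃ i j : Fin n, i ≠ j ∧
        enorm2 (w i) + enorm2 (w j) - enorm2 (w i + w j) = 2 / n) := by
  obtain ⟨m, rfl⟩ : ∃ m, n = m + 2 := ⟨n - 2, by omega⟩
  have hm : 0 < m := by omega
  have hN := two_lt_natCast_add_two hm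
  refine ⟨isoscelesPolygon m, sum_isoscelesPolygon hm, sum_enorm2_isoscelesPolygon hm,
    fun i j _ => triangleDefect_le_of_mem_isoscelesEdges hN
      (isoscelesPolygon_mem_isoscelesEdges i) (isoscelesPolygon_mem_isoscelesEdges j),
    0, 1, zero_ne_one, triangleDefect_legEdge_legEdge_neg hN⟩
end

section
/- For any two vectors a, b ∈ ℝ², the smallest singular value σ₂ of the 2×2 matrix with rows a and b satisfies σ₂² = (|a²| + |b²| − |a² + b²|)/2, where a² and b² are the squares of a and b and |·| is the Euclidean norm. -/
open Matrix Finset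

/-- `σ₂² = (|a²| + |b²| − |a² + b²|)/2` for the 2×2 matrix with
rows `a` and `b`. -/
theorem sigma2_sq_eq (a b : Fin 2 → ℝ) :
    sigma2 !![a 0, a 1; b 0, b 1] ^ 2 =
      (enorm2 (vsq a) + enorm2 (vsq b) - enorm2 (vsq a + vsq b)) / 2 := by

  have htr : (!![a 0, a 1; b 0, b 1]ᵀ * !![a 0, a 1; b 0, b 1]).trace
      = a 0 ^ 2 + a 1 ^ 2 + b 0 ^ 2 + b 1 ^ 2 := by
    simp [Matrix.trace_fin_two, Matrix.mul_apply, Fin.sum_univ_two, Matrix.vecHead, Matrix.vecTail]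
    ring
  have hdet : (!![a 0, a 1; b 0, b 1]).det = a 0 * b 1 - a 1 * b 0 := by
    simp [Matrix.det_fin_two]
  set T : ℝ := a 0 ^ 2 + a 1 ^ 2 + b 0 ^ 2 + b 1 ^ 2 with hT
  set D : ℝ := a 0 * b 1 - a 1 * b 0 with hD
  have hTnn : 0 ≤ T := by positivity
  have hS : Real.sqrt (T ^ 2 - 4 * D ^ 2) = enorm2 (vsq a + vsq b) := by
    unfold enorm2 vsq
    congr 1
    simp [hT, hD]
    ring
  have hea : enorm2 (vsq a) = a 0 ^ 2 + a 1 ^ 2 := by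
    unfold enorm2 vsq
    have : (![a 0 ^ 2 - a 1 ^ 2, 2 * a 0 * a 1] : Fin 2 → ℝ) 0 ^ 2 +
        (![a 0 ^ 2 - a 1 ^ 2, 2 * a 0 * a 1] : Fin 2 → ℝ) 1 ^ 2
        = (a 0 ^ 2 + a 1 ^ 2) ^ 2 := by simp; ring
    rw [this, Real.sqrt_sq (by positivity)]
  have heb : enorm2 (vsq b) = b 0 ^ 2 + b 1 ^ 2 := by
    unfold enorm2 vsq
    have : (![b 0 ^ 2 - b 1 ^ 2, 2 * b 0 * b 1] : Fin 2 → ℝ) 0 ^ 2 +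
        (![b 0 ^ 2 - b 1 ^ 2, 2 * b 0 * b 1] : Fin 2 → ℝ) 1 ^ 2
        = (b 0 ^ 2 + b 1 ^ 2) ^ 2 := by simp; ring
    rw [this, Real.sqrt_sq (by positivity)]
  have hSle : Real.sqrt (T ^ 2 - 4 * D ^ 2) ≤ T := by
    calc Real.sqrt (T ^ 2 - 4 * D ^ 2) ≤ Real.sqrt (T ^ 2) :=
          Real.sqrt_le_sqrt (by nlinarith [sq_nonneg D])
      _ = T := Real.sqrt_sq hTnn
  unfold sigma2
  rw [htr, hdet]
  rw [Real.sq_sqrt (by linarith)]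
  rw [hS, hea, heb]
  ring
end

section
/- Let v₁, v₂, v₃ ∈ ℝ² be vectors such that their squares v₁², v₂², v₃² are pairwise non-collinear (pairwise linearly independent). Consider the three 2×2 matrices whose rows are (v₁, v₂), (v₁, v₃) and (v₂, v₃) respectively; each has distinct singular values and hence a first right-singular direction uniquely determined up to sign. Then at least two of these three matrices have pairwise different first right-singular directions (equivalently, pairwise different second right-singular directions). -/
open Matrix Finset

/-- `β` is a (unit) right-singular vector of `B` for its largest singular value. -/
def IsFirstRightSingular (B : Matrix (Fin 2) (Fin 2) ℝ) (β : Fin 2 → ℝ) : Prop :=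
  enorm2 β = 1 ∧ (Bᵀ * B) *ᵥ β = (sigma1 B ^ 2) • β

/-- Two matrices have different first right-singular directions. -/
def DiffFirstDirection (B C : Matrix (Fin 2) (Fin 2) ℝ) : Prop :=
  ∀ β γ : Fin 2 → ℝ, IsFirstRightSingular B β → IsFirstRightSingular C γ →
    β ≠ γ ∧ β ≠ -γ

lemma crossne {u v : Fin 2 → ℝ} (h : LinearIndependent ℝ ![u, v]) :
    u 0 * v 1 - u 1 * v 0 ≠ 0 := by
  intro hc
  have H := LinearIndependent.pair_iff.mp h
  have h1 := H (v 1) (-(u 1)) (by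
    funext i; fin_cases i <;> (simp; ring_nf) <;> nlinarith [hc])
  have h0 := H (v 0) (-(u 0)) (by
    funext i; fin_cases i <;> (simp; ring_nf) <;> nlinarith [hc])
  have hu : u = 0 := by
    funext i; fin_cases i
    · simpa using neg_eq_zero.mp h0.2
    · simpa using neg_eq_zero.mp h1.2
  have := H 1 0 (by simp [hu])
  exact one_ne_zero this.1

lemma sumne {u v : Fin 2 → ℝ} (h : LinearIndependent ℝ ![u, v]) : u + v ≠ 0 := by
  intro hc
  have := (LinearIndependent.pair_iff.mp h 1 1 (by simpa using hc)).1
  exact one_ne_zero this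

lemma gap (u w : Fin 2 → ℝ) (h : vsq u + vsq w ≠ 0) :
    sigma2 !![u 0, u 1; w 0, w 1] < sigma1 !![u 0, u 1; w 0, w 1] := by
  set B : Matrix (Fin 2) (Fin 2) ℝ := !![u 0, u 1; w 0, w 1] with hB
  have hT : (Bᵀ * B).trace = u 0^2 + u 1^2 + w 0^2 + w 1^2 := by
    simp [hB, Matrix.trace_fin_two, Matrix.mul_apply, Fin.sum_univ_two,
      Matrix.vecHead, Matrix.vecTail, Matrix.transpose_apply]
    ring
  have hdet : B.det = u 0 * w 1 - u 1 * w 0 := by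
    simp [hB, Matrix.det_fin_two]
  set a := u 0^2 - u 1^2 + (w 0^2 - w 1^2) with ha
  set b := 2 * u 0 * u 1 + 2 * w 0 * w 1 with hb
  have hab : 0 < a^2 + b^2 := by
    rcases (em (a = 0 ∧ b = 0)) with ⟨h1, h2⟩ | hne
    · exfalso; apply h; funext i; fin_cases i <;>
        simp [vsq] <;> nlinarith [h1, h2]
    · rcases not_and_or.mp hne with h1 | h1 <;> positivity
  have key : (Bᵀ * B).trace ^ 2 - 4 * B.det ^ 2 = a^2 + b^2 := by
    rw [hT, hdet]; ring
  have hD : Real.sqrt ((Bᵀ * B).trace ^ 2 - 4 * B.det ^ 2) = Real.sqrt (a^2+b^2) := by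
    rw [key]
  unfold sigma1 sigma2
  rw [hD]
  set D := Real.sqrt (a^2+b^2) with hDdef
  have hD2 : D^2 = a^2 + b^2 := Real.sq_sqrt (le_of_lt hab)
  have hDpos : 0 < D := Real.sqrt_pos.mpr hab
  have hTnn : 0 ≤ (Bᵀ * B).trace := by rw [hT]; positivity
  have hDleT : D ≤ (Bᵀ * B).trace := by
    nlinarith [hD2, key, hTnn, hDpos]
  apply Real.sqrt_lt_sqrt <;> linarith

lemma firstDir (x0 x1 y0 y1 : ℝ) (β : Fin 2 → ℝ) (σ : ℝ)
    (hn : enorm2 β = 1)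
    (he : (!![x0,x1;y0,y1]ᵀ * !![x0,x1;y0,y1]) *ᵥ β = σ • β) :
    ∃ r : ℝ, x0^2 - x1^2 + (y0^2 - y1^2) = r * (β 0^2 - β 1^2) ∧
      2*x0*x1 + 2*y0*y1 = r * (2 * β 0 * β 1) := by
  have hn' : β 0^2 + β 1^2 = 1 := Real.sqrt_eq_one.mp hn
  have h0 := congrFun he 0
  have h1 := congrFun he 1
  simp [Matrix.mulVec, Matrix.mul_apply, dotProduct, Fin.sum_univ_two,
    Matrix.transpose_apply, Matrix.vecHead, Matrix.vecTail] at h0 h1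
  refine ⟨2*σ - (x0^2+x1^2+y0^2+y1^2), ?_, ?_⟩
  · linear_combination 2*β 0*h0 - 2*β 1*h1 - (x0^2 - x1^2 + (y0^2 - y1^2))*hn'
  · linear_combination 2*β 1*h0 + 2*β 0*h1 - (2*x0*x1 + 2*y0*y1)*hn'

lemma keyalg (A0 A1 B0 B1 C0 C1 d0 d1 e0 e1 r1 r2 p1 p2 : ℝ)
    (hp : p1 ≠ 0)
    (e12a : A0+B0 = r1*d0) (e12b : A1+B1 = r1*d1)
    (e13a : A0+C0 = r2*d0) (e13b : A1+C1 = r2*d1)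
    (f12a : A0+B0 = p1*e0) (f12b : A1+B1 = p1*e1)
    (f23a : B0+C0 = p2*e0) (f23b : B1+C1 = p2*e1) :
    A0*B1 - A1*B0 = 0 := by
  have g0 : 2*A0 = r1*d0 + r2*d0 - p2*e0 := by linarith
  have g1 : 2*A1 = r1*d1 + r2*d1 - p2*e1 := by linarith
  have g2 : 2*B0 = r1*d0 - r2*d0 + p2*e0 := by linarith
  have g3 : 2*B1 = r1*d1 - r2*d1 + p2*e1 := by linarith
  have k0 : r1*d0 = p1*e0 := by linarith
  have k1 : r1*d1 = p1*e1 := by linarith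
  have h4 : p1 * ((2*A0)*(2*B1) - (2*A1)*(2*B0)) = 0 := by
    rw [g0, g1, g2, g3]
    linear_combination 2*p1*p2*e1*k0 - 2*p1*p2*e0*k1
  rcases mul_eq_zero.mp h4 with h | h
  · exact absurd h hp
  · linarith

set_option maxHeartbeats 1000000 in
/-- if `v₁², v₂², v₃²` are pairwise linearly independent, then each
of the three 2×2 matrices with rows `(v₁,v₂)`, `(v₁,v₃)`, `(v₂,v₃)` has
distinct singular values, and at least two of them have different first
right-singular directions. -/
theorem lemma_two_different_directions (v₁ v₂ v₃ : Fin 2 → ℝ)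
    (h12 : LinearIndependent ℝ ![vsq v₁, vsq v₂])
    (h13 : LinearIndependent ℝ ![vsq v₁, vsq v₃])
    (h23 : LinearIndependent ℝ ![vsq v₂, vsq v₃]) :
    (sigma2 !![v₁ 0, v₁ 1; v₂ 0, v₂ 1] < sigma1 !![v₁ 0, v₁ 1; v₂ 0, v₂ 1]) ∧
    (sigma2 !![v₁ 0, v₁ 1; v₃ 0, v₃ 1] < sigma1 !![v₁ 0, v₁ 1; v₃ 0, v₃ 1]) ∧
    (sigma2 !![v₂ 0, v₂ 1; v₃ 0, v₃ 1] < sigma1 !![v₂ 0, v₂ 1; v₃ 0, v₃ 1]) ∧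
    (DiffFirstDirection !![v₁ 0, v₁ 1; v₂ 0, v₂ 1] !![v₁ 0, v₁ 1; v₃ 0, v₃ 1] ∨
     DiffFirstDirection !![v₁ 0, v₁ 1; v₂ 0, v₂ 1] !![v₂ 0, v₂ 1; v₃ 0, v₃ 1] ∨
     DiffFirstDirection !![v₁ 0, v₁ 1; v₃ 0, v₃ 1] !![v₂ 0, v₂ 1; v₃ 0, v₃ 1]) := by
  refine ⟨gap v₁ v₂ (sumne h12), gap v₁ v₃ (sumne h13), gap v₂ v₃ (sumne h23), ?_⟩
  by_contra hcon
  push_neg at hcon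
  obtain ⟨hA, hB, -⟩ := hcon
  unfold DiffFirstDirection at hA hB
  push_neg at hA hB
  obtain ⟨β, γ, ⟨hβn, hβe⟩, ⟨hγn, hγe⟩, hbg⟩ := hA
  obtain ⟨β', γ', ⟨hβ'n, hβ'e⟩, ⟨hγ'n, hγ'e⟩, hbg'⟩ := hB
  -- relations for pair (12,13)
  obtain ⟨r₁, e12a, e12b⟩ := firstDir (v₁ 0) (v₁ 1) (v₂ 0) (v₂ 1) β _ hβn hβe
  obtain ⟨r₂, e13a, e13b⟩ := firstDir (v₁ 0) (v₁ 1) (v₃ 0) (v₃ 1) γ _ hγn hγe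
  -- relations for pair (12,23)
  obtain ⟨p₁, f12a, f12b⟩ := firstDir (v₁ 0) (v₁ 1) (v₂ 0) (v₂ 1) β' _ hβ'n hβ'e
  obtain ⟨p₂, f23a, f23b⟩ := firstDir (v₂ 0) (v₂ 1) (v₃ 0) (v₃ 1) γ' _ hγ'n hγ'e
  -- replace γ by β and γ' by β' in the squared-direction expressions
  have hd : γ 0^2 - γ 1^2 = β 0^2 - β 1^2 ∧ 2 * γ 0 * γ 1 = 2 * β 0 * β 1 := by
    by_cases hc : β = γ
    · rw [hc]; exact ⟨rfl, rfl⟩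
    · have h' := hbg hc
      have h0 : β 0 = -(γ 0) := by rw [h']; simp
      have h1 : β 1 = -(γ 1) := by rw [h']; simp
      rw [h0, h1]; constructor <;> ring
  have hd' : γ' 0^2 - γ' 1^2 = β' 0^2 - β' 1^2 ∧ 2 * γ' 0 * γ' 1 = 2 * β' 0 * β' 1 := by
    by_cases hc : β' = γ'
    · rw [hc]; exact ⟨rfl, rfl⟩
    · have h' := hbg' hc
      have h0 : β' 0 = -(γ' 0) := by rw [h']; simp
      have h1 : β' 1 = -(γ' 1) := by rw [h']; simp
      rw [h0, h1]; constructor <;> ring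
  rw [hd.1] at e13a
  rw [hd.2] at e13b
  rw [hd'.1] at f23a
  rw [hd'.2] at f23b
  -- p₁ ≠ 0, otherwise vsq v₁ + vsq v₂ = 0
  have hp : p₁ ≠ 0 := by
    intro hp0
    rw [hp0, zero_mul] at f12a f12b
    apply sumne h12
    funext i; fin_cases i <;> simp [vsq] <;> linarith [f12a, f12b]
  have key := keyalg (v₁ 0^2 - v₁ 1^2) (2*v₁ 0*v₁ 1) (v₂ 0^2 - v₂ 1^2) (2*v₂ 0*v₂ 1)
    (v₃ 0^2 - v₃ 1^2) (2*v₃ 0*v₃ 1) (β 0^2 - β 1^2) (2*β 0*β 1)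
    (β' 0^2 - β' 1^2) (2*β' 0*β' 1) r₁ r₂ p₁ p₂ hp
    (by linarith [e12a]) (by linarith [e12b]) (by linarith [e13a]) (by linarith [e13b])
    (by linarith [f12a]) (by linarith [f12b]) (by linarith [f23a]) (by linarith [f23b])
  have hcross := crossne h12
  apply hcross
  simp only [vsq]
  simp
  linear_combination key
end

section
/- Let u, v ∈ ℝ² be vectors whose squares u² and v² are non-collinear (linearly independent). Then ⟨u, v⟩ ≠ 0, and the 2×2 matrix with rows u and v has two distinct singular values σ₁ > σ₂. -/
open Matrix Finset

lemma det_ne_of_li (x y : Fin 2 → ℝ) (h : LinearIndependent ℝ ![x, y]) :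
    x 0 * y 1 - x 1 * y 0 ≠ 0 := by
  intro hd
  rw [LinearIndependent.pair_iff] at h
  have h1 := h (y 1) (-(x 1)) (by
    funext i
    fin_cases i <;> simp <;> ring_nf <;> linarith)
  have h2 := h (-(y 0)) (x 0) (by
    funext i
    fin_cases i <;> simp <;> ring_nf <;> linarith)
  have := h 1 0 (by
    funext i
    fin_cases i <;> simp [h1.1, h1.2, h2.2] <;> nlinarith [h1.1, h1.2, h2.1, h2.2])
  exact one_ne_zero this.1

set_option maxHeartbeats 800000 in
/-- if `u²` and `v²` are linearly independent, then `⟨u,v⟩ ≠ 0`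
and the 2×2 matrix with rows `u, v` has two distinct singular values. -/
theorem nonorthogonal_and_distinct_singular_values (u v : Fin 2 → ℝ)
    (h : LinearIndependent ℝ ![vsq u, vsq v]) :
    inner2 u v ≠ 0 ∧
      sigma2 !![u 0, u 1; v 0, v 1] < sigma1 !![u 0, u 1; v 0, v 1] := by
  have hdet := det_ne_of_li _ _ h
  simp only [vsq] at hdet
  set a := u 0; set b := u 1; set c := v 0; set d := v 1
  simp only [Matrix.cons_val_zero, Matrix.cons_val_one, Matrix.head_cons] at hdet
  have key : (a^2-b^2) * (2*c*d) - (2*a*b) * (c^2-d^2) = 2*(a*c+b*d)*(a*d-b*c) := by ring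
  rw [key] at hdet
  have hip : a*c + b*d ≠ 0 := by intro h0; apply hdet; rw [h0]; ring
  have hd : a*d - b*c ≠ 0 := by intro h0; apply hdet; rw [h0]; ring
  refine ⟨hip, ?_⟩
  have htr : (!![a, b; c, d]ᵀ * !![a, b; c, d]).trace = a^2+b^2+c^2+d^2 := by
    simp [Matrix.trace_fin_two, Matrix.mul_apply, Fin.sum_univ_two, Matrix.transpose_apply, Matrix.vecHead, Matrix.vecTail]; ring
  have hdt : (!![a, b; c, d]).det = a*d - b*c := by simp [Matrix.det_fin_two]
  rw [sigma1, sigma2, htr, hdt]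
  set T := a^2+b^2+c^2+d^2 with hT
  set D := T^2 - 4*(a*d-b*c)^2 with hD
  have h1 : 0 < (a-d)^2 + (b+c)^2 := by
    rcases lt_or_eq_of_le (by positivity : (0:ℝ) ≤ (a-d)^2+(b+c)^2) with h'|h'
    · exact h'
    · exfalso; apply hip
      have ha : a = d := by nlinarith [sq_nonneg (a-d), sq_nonneg (b+c)]
      have hb : b = -c := by nlinarith [sq_nonneg (a-d), sq_nonneg (b+c)]
      rw [ha, hb]; ring
  have h2 : 0 < (a+d)^2 + (b-c)^2 := by
    rcases lt_or_eq_of_le (by positivity : (0:ℝ) ≤ (a+d)^2+(b-c)^2) with h'|h'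
    · exact h'
    · exfalso; apply hip
      have ha : a = -d := by nlinarith [sq_nonneg (a+d), sq_nonneg (b-c)]
      have hb : b = c := by nlinarith [sq_nonneg (a+d), sq_nonneg (b-c)]
      rw [ha, hb]; ring
  have hDeq : D = ((a-d)^2 + (b+c)^2) * ((a+d)^2 + (b-c)^2) := by rw [hD, hT]; ring
  have hDpos : 0 < D := hDeq ▸ mul_pos h1 h2
  have hsD : 0 < Real.sqrt D := Real.sqrt_pos.2 hDpos
  have hTeq : 2*T = ((a-d)^2 + (b+c)^2) + ((a+d)^2 + (b-c)^2) := by rw [hT]; ring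
  have hTpos : 0 < T := by linarith
  have hDle : D ≤ T^2 := by rw [hD]; linarith [sq_nonneg (a*d-b*c)]
  have hsDle : Real.sqrt D ≤ T := by
    calc Real.sqrt D ≤ Real.sqrt (T^2) := Real.sqrt_le_sqrt hDle
    _ = T := by rw [Real.sqrt_sq hTpos.le]
  apply Real.sqrt_lt_sqrt
  · linarith
  · linarith
end

section
/- Let u, v ∈ ℝ² with u² + v² ≠ 0, and let B be the 2×2 matrix with rows u and v. Then there exists a unit vector β ∈ ℝ² that is a right-singular vector of B for its largest singular value and satisfies β² = (u² + v²)/|u² + v²|; in particular, the first right-singular direction of B is determined by the square root of u² + v². -/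
open Matrix Finset

lemma singular_aux (a b : ℝ) (hab : a^2 + b^2 ≠ 0) :
    ∃ x y : ℝ,
      x^2 + y^2 = 1 ∧
      a*x + b*y = Real.sqrt (a^2+b^2) * x ∧
      b*x - a*y = Real.sqrt (a^2+b^2) * y ∧
      x^2 - y^2 = a / Real.sqrt (a^2+b^2) ∧
      2*(x*y) = b / Real.sqrt (a^2+b^2) := by
  set r := Real.sqrt (a^2+b^2) with hrdef
  have hrr : 0 < a^2+b^2 := lt_of_le_of_ne (by positivity) (Ne.symm hab)
  have hr : 0 < r := Real.sqrt_pos.2 hrr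
  have hr2 : r^2 = a^2+b^2 := Real.sq_sqrt hrr.le
  have har : a ≤ r := by nlinarith
  have har' : -r ≤ a := by nlinarith
  have hxnn : (0:ℝ) ≤ (r+a)/(2*r) := div_nonneg (by linarith) (by linarith)
  have hynn : (0:ℝ) ≤ (r-a)/(2*r) := div_nonneg (by linarith) (by linarith)
  set s : ℝ := if 0 ≤ b then 1 else -1 with hsdef
  have hs2 : s^2 = 1 := by rw [hsdef]; split_ifs <;> norm_num
  set x := Real.sqrt ((r+a)/(2*r)) with hxdef
  set y := s * Real.sqrt ((r-a)/(2*r)) with hydef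
  have hx2 : 2*r*x^2 = r+a := by
    rw [hxdef, Real.sq_sqrt hxnn]; field_simp
  have hy2 : 2*r*y^2 = r-a := by
    rw [hydef, mul_pow, hs2, one_mul, Real.sq_sqrt hynn]; field_simp
  have habs : Real.sqrt ((r+a)/(2*r)) * Real.sqrt ((r-a)/(2*r)) = |b|/(2*r) := by
    rw [← Real.sqrt_mul hxnn]
    have h1 : (r+a)/(2*r) * ((r-a)/(2*r)) = (b/(2*r))^2 := by
      rw [div_mul_div_comm, div_pow]
      congr 1
      · linear_combination hr2
      · ring
    rw [h1, Real.sqrt_sq_eq_abs, abs_div, abs_of_pos (by linarith : (0:ℝ) < 2*r)]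
  have hxy : 2*r*(x*y) = b := by
    have h2 : x*y = s * (|b|/(2*r)) := by rw [hxdef, hydef, ← habs]; ring
    rw [h2, hsdef]
    split_ifs with hb
    · rw [abs_of_nonneg hb]; field_simp
    · rw [abs_of_neg (lt_of_not_ge hb)]; field_simp
  have h2r : (2*r) ≠ 0 := by positivity
  refine ⟨x, y, ?_, ?_, ?_, ?_, ?_⟩
  · have h3 : 2*r*(x^2+y^2) = 2*r*1 := by linarith [hx2, hy2]
    exact mul_left_cancel₀ h2r h3
  · by_cases hx0 : x = 0
    · have h4 : r + a = 0 := by rw [hx0] at hx2; linarith [hx2]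
      have hb0 : b = 0 := by nlinarith
      rw [hx0, hb0]; ring
    · have key : 2*r*(x*((r-a)*x - b*y)) = 0 := by
        linear_combination (r-a)*hx2 - b*hxy + hr2
      have h5 : (r-a)*x - b*y = 0 :=
        ((mul_eq_zero.1 ((mul_eq_zero.1 key).resolve_left h2r)).resolve_left hx0)
      linear_combination -h5
  · by_cases hy0 : y = 0
    · have h4 : r - a = 0 := by rw [hy0] at hy2; linarith [hy2]
      have hb0 : b = 0 := by nlinarith
      rw [hy0, hb0]; ring
    · have key : 2*r*(y*((r+a)*y - b*x)) = 0 := by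
        linear_combination (r+a)*hy2 - b*hxy + hr2
      have h5 : (r+a)*y - b*x = 0 :=
        ((mul_eq_zero.1 ((mul_eq_zero.1 key).resolve_left h2r)).resolve_left hy0)
      linear_combination -h5
  · rw [eq_div_iff hr.ne']
    linear_combination (1/2)*hx2 - (1/2)*hy2
  · rw [eq_div_iff hr.ne']
    linear_combination hxy

/-- the first right-singular direction of the matrix with rows
`u, v` is given by the square root of `u² + v²`: there is a unit
right-singular vector `β` for the largest singular value with
`β² = (u² + v²)/|u² + v²|`. -/
theorem first_singular_direction (u v : Fin 2 → ℝ)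
    (h : vsq u + vsq v ≠ 0) :
    ∃ β : Fin 2 → ℝ, enorm2 β = 1 ∧
      (!![u 0, u 1; v 0, v 1]ᵀ * !![u 0, u 1; v 0, v 1]) *ᵥ β =
        (sigma1 !![u 0, u 1; v 0, v 1] ^ 2) • β ∧
      vsq β = (enorm2 (vsq u + vsq v))⁻¹ • (vsq u + vsq v) := by
  have hw0 : (vsq u + vsq v) 0 = u 0^2 - u 1^2 + (v 0^2 - v 1^2) := by
    simp [vsq]
  have hw1 : (vsq u + vsq v) 1 = 2*(u 0*u 1) + 2*(v 0*v 1) := by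
    simp [vsq]; ring
  have hab : (u 0^2 - u 1^2 + (v 0^2 - v 1^2))^2 + (2*(u 0*u 1) + 2*(v 0*v 1))^2 ≠ 0 := by
    intro h0
    have ha0 : u 0^2 - u 1^2 + (v 0^2 - v 1^2) = 0 := by nlinarith [sq_nonneg (u 0^2 - u 1^2 + (v 0^2 - v 1^2)), sq_nonneg (2*(u 0*u 1) + 2*(v 0*v 1))]
    have hb0 : 2*(u 0*u 1) + 2*(v 0*v 1) = 0 := by nlinarith [sq_nonneg (u 0^2 - u 1^2 + (v 0^2 - v 1^2)), sq_nonneg (2*(u 0*u 1) + 2*(v 0*v 1))]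
    apply h
    funext i
    fin_cases i
    · show (vsq u + vsq v) 0 = 0
      rw [hw0, ha0]
    · show (vsq u + vsq v) 1 = 0
      rw [hw1, hb0]
  obtain ⟨x, y, hxy1, heq1, heq2, hsq1, hsq2⟩ :=
    singular_aux (u 0^2 - u 1^2 + (v 0^2 - v 1^2)) (2*(u 0*u 1) + 2*(v 0*v 1)) hab
  set r := Real.sqrt ((u 0^2 - u 1^2 + (v 0^2 - v 1^2))^2 + (2*(u 0*u 1) + 2*(v 0*v 1))^2) with hrdef
  have hr : 0 < r := Real.sqrt_pos.2 (lt_of_le_of_ne (by positivity) (Ne.symm hab))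
  have henw : enorm2 (vsq u + vsq v) = r := by
    rw [enorm2, hw0, hw1, hrdef]
  have hTt : (!![u 0, u 1; v 0, v 1] : Matrix (Fin 2) (Fin 2) ℝ)ᵀ = !![u 0, v 0; u 1, v 1] := by
    ext i j; fin_cases i <;> fin_cases j <;> rfl
  refine ⟨![x, y], ?_, ?_, ?_⟩
  · rw [enorm2]
    simp only [Matrix.cons_val_zero, Matrix.cons_val_one, Matrix.head_cons]
    rw [hxy1, Real.sqrt_one]
  · have hs1 : sigma1 !![u 0, u 1; v 0, v 1] ^ 2 =
        ((u 0^2 + u 1^2 + v 0^2 + v 1^2) + r)/2 := by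
      have hT : (!![u 0, v 0; u 1, v 1] * !![u 0, u 1; v 0, v 1]).trace =
          u 0^2 + u 1^2 + v 0^2 + v 1^2 := by
        simp [Matrix.trace_fin_two, Matrix.mul_apply, Matrix.transpose_apply, Fin.sum_univ_two]; ring
      have hdet : (!![u 0, u 1; v 0, v 1] : Matrix (Fin 2) (Fin 2) ℝ).det =
          u 0 * v 1 - u 1 * v 0 := by
        simp [Matrix.det_fin_two]
      rw [sigma1, hTt, hT, hdet]
      have hdisc : (u 0^2 + u 1^2 + v 0^2 + v 1^2)^2 - 4*(u 0 * v 1 - u 1 * v 0)^2 =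
          (u 0^2 - u 1^2 + (v 0^2 - v 1^2))^2 + (2*(u 0*u 1) + 2*(v 0*v 1))^2 := by
        ring
      rw [hdisc, ← hrdef]
      refine Real.sq_sqrt ?_
      have h5 : (0:ℝ) ≤ u 0^2 + u 1^2 + v 0^2 + v 1^2 := by positivity
      linarith
    funext i
    fin_cases i
    · show ((!![u 0, u 1; v 0, v 1]ᵀ * !![u 0, u 1; v 0, v 1]) *ᵥ ![x, y]) 0 =
        (sigma1 !![u 0, u 1; v 0, v 1] ^ 2) * (![x, y] 0)
      rw [hs1, hTt]
      simp [Matrix.mulVec, dotProduct, Matrix.mul_apply, Matrix.transpose_apply, Fin.sum_univ_two]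
      linear_combination (1/2) * heq1
    · show ((!![u 0, u 1; v 0, v 1]ᵀ * !![u 0, u 1; v 0, v 1]) *ᵥ ![x, y]) 1 =
        (sigma1 !![u 0, u 1; v 0, v 1] ^ 2) * (![x, y] 1)
      rw [hs1, hTt]
      simp [Matrix.mulVec, dotProduct, Matrix.mul_apply, Matrix.transpose_apply, Fin.sum_univ_two]
      linear_combination (1/2) * heq2
  · rw [henw]
    funext i
    fin_cases i
    · show vsq ![x, y] 0 = r⁻¹ * ((vsq u + vsq v) 0)
      rw [hw0]
      simp [vsq]
      linear_combination hsq1 - (div_eq_inv_mul (u 0^2 - u 1^2 + (v 0^2 - v 1^2)) r)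
    · show vsq ![x, y] 1 = r⁻¹ * ((vsq u + vsq v) 1)
      rw [hw1]
      simp [vsq]
      linear_combination hsq2 - (div_eq_inv_mul (2*(u 0*u 1) + 2*(v 0*v 1)) r)
end

section
/- Let n ≥ 3 and let A be a real n×2 matrix with orthonormal columns (AᵀA = I₂) whose rows a₁, …, aₙ all satisfy |aᵢ|² > 1/n. Then there exist indices i ≠ j such that ⟨aᵢ, aⱼ⟩² ≤ (|aᵢ|² − 1/n)(|aⱼ|² − 1/n). -/
open Matrix Finset

lemma aux_quad {c p q e : ℝ} (hc : 0 < c) (hp : 0 ≤ 2*c*p - p^2 - e^2)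
    (hq : 0 ≤ 2*c*q - q^2 - e^2) : p + q ≤ 4*c := by
  nlinarith [sq_nonneg (p - q), sq_nonneg e, sq_nonneg (p + q)]

lemma aux_key {c a b d : ℝ} (h0 : 0 ≤ 2*c*a - a^2 - d^2) (h1 : 0 ≤ 2*c*b - b^2 - d^2)
    (hQ : a + b = 4*c) : a = 2*c ∧ d = 0 := by
  have hb : b = 4*c - a := by linarith
  subst hb
  have h2 : (a - 2*c)^2 ≤ 0 := by nlinarith [sq_nonneg d]
  have h3 : d^2 ≤ 0 := by nlinarith [sq_nonneg (a - 2*c)]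
  have h4 : a - 2*c = 0 := sq_eq_zero_iff.mp (le_antisymm h2 (sq_nonneg _))
  have h5 : d = 0 := sq_eq_zero_iff.mp (le_antisymm h3 (sq_nonneg _))
  exact ⟨by linarith, h5⟩

set_option maxHeartbeats 1000000 in
/-- if all rows of a matrix with orthonormal columns have squared
norm greater than `1/n`, then some pair of rows satisfies
`⟨aᵢ,aⱼ⟩² ≤ (|aᵢ|² − 1/n)(|aⱼ|² − 1/n)`. -/
theorem exists_good_pair (n : ℕ) (hn : 3 ≤ n) (A : Matrix (Fin n) (Fin 2) ℝ)
    (hA : Aᵀ * A = 1) (hrows : ∀ i : Fin n, 1 / (n : ℝ) < enorm2 (A i) ^ 2) :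
    ∃ i j : Fin n, i ≠ j ∧
      inner2 (A i) (A j) ^ 2 ≤
        (enorm2 (A i) ^ 2 - 1 / n) * (enorm2 (A j) ^ 2 - 1 / n) := by
  by_contra hcon
  push_neg at hcon
  have hnR : (0:ℝ) < (n:ℝ) := by
    have : 0 < n := by omega
    exact_mod_cast this
  have hnne : (n:ℝ) ≠ 0 := ne_of_gt hnR
  set c : ℝ := 1 / (n:ℝ) with hcdef
  have hc : 0 < c := by positivity
  have hcn : c * (n:ℝ) = 1 := by rw [hcdef]; field_simp
  clear_value c
  -- squared norms of rows
  have hr : ∀ i : Fin n, enorm2 (A i) ^ 2 = (A i 0)^2 + (A i 1)^2 := by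
    intro i
    have h0 : (0:ℝ) ≤ (A i 0)^2 + (A i 1)^2 := by positivity
    simp only [enorm2]
    exact Real.sq_sqrt h0
  -- entry identities from AᵀA = 1
  have hAe : ∀ a b : Fin 2, (∑ i, A i a * A i b) = (1 : Matrix (Fin 2) (Fin 2) ℝ) a b := by
    intro a b
    have h := congrFun (congrFun hA a) b
    simpa [Matrix.mul_apply, Matrix.transpose_apply] using h
  have hxx : (∑ i, A i 0 * A i 0) = 1 := by simpa [Matrix.one_apply] using hAe 0 0
  have hyy : (∑ i, A i 1 * A i 1) = 1 := by simpa [Matrix.one_apply] using hAe 1 1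
  have hxy : (∑ i, A i 0 * A i 1) = 0 := by
    have h := hAe 0 1
    simpa [Matrix.one_apply] using h
  -- the auxiliary vectors
  set f0 : Fin n → ℝ := fun i => (A i 0)^2 - (A i 1)^2 with hf0def
  set f1 : Fin n → ℝ := fun i => 2 * (A i 0) * (A i 1) with hf1def
  set t : Fin n → ℝ := fun i => (A i 0)^2 + (A i 1)^2 - 2*c with htdef
  clear_value f0 f1 t
  have hSf0 : (∑ i, f0 i) = 0 := by
    simp only [hf0def]
    rw [Finset.sum_sub_distrib]
    have e0 : (∑ i, (A i 0)^2) = 1 := by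
      rw [Finset.sum_congr rfl (fun i _ => (pow_two (A i 0)))]; exact hxx
    have e1 : (∑ i, (A i 1)^2) = 1 := by
      rw [Finset.sum_congr rfl (fun i _ => (pow_two (A i 1)))]; exact hyy
    rw [e0, e1]; ring
  have hSf1 : (∑ i, f1 i) = 0 := by
    simp only [hf1def]
    have : ∀ i ∈ Finset.univ, 2 * (A i 0) * (A i 1) = 2 * (A i 0 * A i 1) := by
      intro i _; ring
    rw [Finset.sum_congr rfl this, ← Finset.mul_sum, hxy]; ring
  have hSt : (∑ i, t i) = 0 := by
    simp only [htdef]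
    rw [Finset.sum_sub_distrib, Finset.sum_add_distrib]
    have e0 : (∑ i, (A i 0)^2) = 1 := by
      rw [Finset.sum_congr rfl (fun i _ => (pow_two (A i 0)))]; exact hxx
    have e1 : (∑ i, (A i 1)^2) = 1 := by
      rw [Finset.sum_congr rfl (fun i _ => (pow_two (A i 1)))]; exact hyy
    rw [e0, e1, Finset.sum_const, Finset.card_univ, Fintype.card_fin, nsmul_eq_mul]
    nlinarith [hcn]
  -- the positive matrix M
  set M : Fin n → Fin n → ℝ :=
    fun i j => f0 i * f0 j + f1 i * f1 j + 2*c^2 - t i * t j with hMdef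
  clear_value M
  have hMpos : ∀ i j : Fin n, i ≠ j → 0 < M i j := by
    intro i j hij
    have h := hcon i j hij
    rw [hr i, hr j] at h
    have hMeq : M i j =
        2 * (inner2 (A i) (A j)^2
          - (((A i 0)^2 + (A i 1)^2) - c) * (((A j 0)^2 + (A j 1)^2) - c)) := by
      simp only [hMdef, hf0def, hf1def, htdef, inner2]
      ring
    rw [hMeq]
    nlinarith [h]
  have hMsymm : ∀ i j : Fin n, M i j = M j i := by
    intro i j; simp only [hMdef]; ring
  -- row sums of M
  have hrow : ∀ i : Fin n, (∑ j, M i j) = 2*c := by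
    intro i
    simp only [hMdef]
    have hconstsum : (∑ _j : Fin n, 2*c^2) = (n:ℝ)*(2*c^2) := by
      rw [Finset.sum_const, Finset.card_univ, Fintype.card_fin, nsmul_eq_mul]
    rw [Finset.sum_sub_distrib, Finset.sum_add_distrib, Finset.sum_add_distrib,
      hconstsum, ← Finset.mul_sum, ← Finset.mul_sum, ← Finset.mul_sum, hSf0, hSf1, hSt]
    nlinarith [hcn]
  -- double sum with w i * w j
  have hww : ∀ w : Fin n → ℝ, (∑ i, ∑ j, M i j * (w i * w j))
      = (∑ i, f0 i * w i)^2 + (∑ i, f1 i * w i)^2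
        + 2*c^2*(∑ i, w i)^2 - (∑ i, t i * w i)^2 := by
    intro w
    have step1 : (∑ i, ∑ j, M i j * (w i * w j))
        = ∑ i, ∑ j, ((f0 i * w i) * (f0 j * w j) + (f1 i * w i) * (f1 j * w j)
            + 2*c^2 * (w i * w j) - (t i * w i) * (t j * w j)) := by
      apply Finset.sum_congr rfl; intro i _
      apply Finset.sum_congr rfl; intro j _
      simp only [hMdef]; ring
    rw [step1]
    rw [show (∑ i, ∑ j, ((f0 i * w i) * (f0 j * w j) + (f1 i * w i) * (f1 j * w j)
            + 2*c^2 * (w i * w j) - (t i * w i) * (t j * w j)))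
      = (∑ i, ∑ j, (f0 i * w i) * (f0 j * w j))
        + (∑ i, ∑ j, (f1 i * w i) * (f1 j * w j))
        + (∑ i, ∑ j, 2*c^2 * (w i * w j))
        - (∑ i, ∑ j, (t i * w i) * (t j * w j)) from by
        simp only [Finset.sum_add_distrib, Finset.sum_sub_distrib]]
    rw [← Finset.sum_mul_sum Finset.univ Finset.univ (fun i => f0 i * w i) (fun j => f0 j * w j)]
    rw [← Finset.sum_mul_sum Finset.univ Finset.univ (fun i => f1 i * w i) (fun j => f1 j * w j)]
    rw [← Finset.sum_mul_sum Finset.univ Finset.univ (fun i => t i * w i) (fun j => t j * w j)]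
    have hcc : (∑ i, ∑ j, 2*c^2 * (w i * w j)) = 2*c^2 * ((∑ i, w i) * (∑ i, w i)) := by
      rw [Finset.sum_mul_sum Finset.univ Finset.univ w w, Finset.mul_sum]
      apply Finset.sum_congr rfl; intro i _
      rw [Finset.mul_sum]
    rw [hcc]
    ring
  -- double sums with squares
  have hsq1 : ∀ w : Fin n → ℝ, (∑ i, ∑ j, M i j * (w i)^2) = 2*c * (∑ i, (w i)^2) := by
    intro w
    have : (∑ i, ∑ j, M i j * (w i)^2) = ∑ i, (∑ j, M i j) * (w i)^2 := by
      apply Finset.sum_congr rfl; intro i _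
      rw [Finset.sum_mul]
    rw [this]
    rw [Finset.sum_congr rfl (fun i _ => by rw [hrow i])]
    rw [← Finset.mul_sum]
  have hsq2 : ∀ w : Fin n → ℝ, (∑ i, ∑ j, M i j * (w j)^2) = 2*c * (∑ i, (w i)^2) := by
    intro w
    rw [Finset.sum_comm]
    have : (∑ j, ∑ i, M i j * (w j)^2) = ∑ j, ∑ i, M j i * (w j)^2 := by
      apply Finset.sum_congr rfl; intro j _
      apply Finset.sum_congr rfl; intro i _
      rw [hMsymm]
    rw [this]
    exact hsq1 w
  -- the master identity for the quadratic form
  set Bq : (Fin n → ℝ) → ℝ := fun w =>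
    2*c*(∑ i, (w i)^2) + (∑ i, t i * w i)^2 - (∑ i, f0 i * w i)^2
      - (∑ i, f1 i * w i)^2 - 2*c^2*(∑ i, w i)^2 with hBqdef
  clear_value Bq
  have hB : ∀ w : Fin n → ℝ,
      (∑ i, ∑ j, M i j * (w i - w j)^2) = 2 * Bq w := by
    intro w
    have step1 : (∑ i, ∑ j, M i j * (w i - w j)^2)
        = ∑ i, ∑ j, (M i j * (w i)^2 - 2 * (M i j * (w i * w j)) + M i j * (w j)^2) := by
      apply Finset.sum_congr rfl; intro i _
      apply Finset.sum_congr rfl; intro j _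
      ring
    rw [step1]
    rw [show (∑ i, ∑ j, (M i j * (w i)^2 - 2 * (M i j * (w i * w j)) + M i j * (w j)^2))
      = (∑ i, ∑ j, M i j * (w i)^2) - 2 * (∑ i, ∑ j, M i j * (w i * w j))
        + (∑ i, ∑ j, M i j * (w j)^2) from by
        simp only [Finset.sum_add_distrib, Finset.sum_sub_distrib, ← Finset.mul_sum]]
    rw [hsq1 w, hsq2 w, hww w, hBqdef]
    ring
  -- nonnegativity and strict positivity of Bq
  have hBnonneg : ∀ w : Fin n → ℝ, 0 ≤ Bq w := by
    intro w
    have h0 : 0 ≤ (∑ i, ∑ j, M i j * (w i - w j)^2) := by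
      apply Finset.sum_nonneg; intro i _
      apply Finset.sum_nonneg; intro j _
      rcases eq_or_ne i j with h | h
      · subst h; simp
      · exact mul_nonneg (le_of_lt (hMpos i j h)) (sq_nonneg _)
    have := hB w
    linarith
  have hBstrict : ∀ (w : Fin n → ℝ) (i0 j0 : Fin n), w i0 ≠ w j0 → 0 < Bq w := by
    intro w i0 j0 hne
    have hij : i0 ≠ j0 := by
      intro h; apply hne; rw [h]
    have hterm : 0 < M i0 j0 * (w i0 - w j0)^2 :=
      mul_pos (hMpos i0 j0 hij) (pow_two_pos_of_ne_zero (sub_ne_zero.mpr hne))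
    have hinner_nonneg : ∀ i : Fin n, 0 ≤ (∑ j, M i j * (w i - w j)^2) := by
      intro i
      apply Finset.sum_nonneg; intro j _
      rcases eq_or_ne i j with h | h
      · subst h; simp
      · exact mul_nonneg (le_of_lt (hMpos i j h)) (sq_nonneg _)
    have hinner_pos : 0 < (∑ j, M i0 j * (w i0 - w j)^2) := by
      apply Finset.sum_pos'
      · intro j _
        rcases eq_or_ne i0 j with h | h
        · subst h; simp
        · exact mul_nonneg (le_of_lt (hMpos i0 j h)) (sq_nonneg _)
      · exact ⟨j0, Finset.mem_univ _, hterm⟩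
    have h0 : 0 < (∑ i, ∑ j, M i j * (w i - w j)^2) := by
      apply Finset.sum_pos'
      · intro i _; exact hinner_nonneg i
      · exact ⟨i0, Finset.mem_univ _, hinner_pos⟩
    have := hB w
    linarith
  have hBzero : ∀ w : Fin n → ℝ, Bq w = 0 → (∑ i, w i) = 0 → ∀ i, w i = 0 := by
    intro w h0 hs i
    have hconst : ∀ a b : Fin n, w a = w b := by
      intro a b
      by_contra hne
      have := hBstrict w a b hne
      linarith
    have hsum : (∑ j, w j) = (n:ℝ) * w i := by
      rw [Finset.sum_congr rfl (fun j _ => hconst j i), Finset.sum_const,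
        Finset.card_univ, Fintype.card_fin, nsmul_eq_mul]
    rw [hsum] at hs
    have := mul_eq_zero.mp hs
    rcases this with h | h
    · exact absurd h hnne
    · exact h
  -- scalar quantities
  set τ : ℝ := ∑ i, (t i)^2 with hτdef
  set g0 : ℝ := ∑ i, f0 i * t i with hg0def
  set g1 : ℝ := ∑ i, f1 i * t i with hg1def
  set p00 : ℝ := ∑ i, (f0 i)^2 with hp00def
  set p01 : ℝ := ∑ i, f0 i * f1 i with hp01def
  set p11 : ℝ := ∑ i, (f1 i)^2 with hp11def
  clear_value τ g0 g1 p00 p01 p11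
  have hτ0 : 0 ≤ τ := by
    rw [hτdef]; exact Finset.sum_nonneg (fun i _ => sq_nonneg _)
  -- trace identity : p00 + p11 = 4c + τ
  have hQ : p00 + p11 = 4*c + τ := by
    have key : p00 + p11 - τ = 4*c := by
      have step : p00 + p11 - τ
          = ∑ i, ((f0 i)^2 + (f1 i)^2 - (t i)^2) := by
        rw [hp00def, hp11def, hτdef, Finset.sum_sub_distrib, Finset.sum_add_distrib]
      have pt : ∀ i ∈ Finset.univ, (f0 i)^2 + (f1 i)^2 - (t i)^2
          = 4*c*(A i 0 * A i 0) + 4*c*(A i 1 * A i 1) - 4*c^2 := by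
        intro i _
        simp only [hf0def, hf1def, htdef]; ring
      rw [step, Finset.sum_congr rfl pt]
      have hconstsum : (∑ _j : Fin n, 4*c^2) = (n:ℝ)*(4*c^2) := by
        rw [Finset.sum_const, Finset.card_univ, Fintype.card_fin, nsmul_eq_mul]
      rw [Finset.sum_sub_distrib, Finset.sum_add_distrib, hconstsum, ← Finset.mul_sum,
        ← Finset.mul_sum, hxx, hyy]
      nlinarith [hcn]
    linarith
  -- value of Bq at t
  have hBt_val : Bq t = 2*c*τ + τ^2 - g0^2 - g1^2 := by
    simp only [hBqdef]
    have e1 : (∑ i, t i * t i) = τ := by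
      rw [hτdef]; apply Finset.sum_congr rfl; intro i _; rw [pow_two]
    have e2 : (∑ i, (t i)^2) = τ := hτdef.symm
    have e3 : (∑ i, f0 i * t i) = g0 := hg0def.symm
    have e4 : (∑ i, f1 i * t i) = g1 := hg1def.symm
    rw [e1, e2, e3, e4, hSt]
    ring
  have hBt : 0 ≤ 2*c*τ + τ^2 - g0^2 - g1^2 := by
    rw [← hBt_val]; exact hBnonneg t
  -- the Schur vectors
  have hden : 0 < 2*c + τ := by linarith
  have hdenne : 2*c + τ ≠ 0 := ne_of_gt hden
  set lam : ℝ := 1 / (2*c + τ) with hlamdef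
  have hlam : lam * (2*c + τ) = 1 := by
    rw [hlamdef]; field_simp
  clear_value lam
  -- expansions of sums for u = fa - μ t
  have hexp_sum : ∀ (a : Fin n → ℝ) (μ : ℝ), (∑ i, (a i - μ * t i)) = (∑ i, a i) - μ * (∑ i, t i) := by
    intro a μ
    rw [Finset.sum_sub_distrib, ← Finset.mul_sum]
  have hexp_sq : ∀ (a : Fin n → ℝ) (μ : ℝ), (∑ i, (a i - μ * t i)^2)
      = (∑ i, (a i)^2) - 2*μ*(∑ i, a i * t i) + μ^2 * τ := by
    intro a μ
    have : ∀ i ∈ Finset.univ, (a i - μ * t i)^2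
        = (a i)^2 - 2*μ*(a i * t i) + μ^2 * (t i)^2 := by
      intro i _; ring
    rw [Finset.sum_congr rfl this, Finset.sum_add_distrib, Finset.sum_sub_distrib,
      ← Finset.mul_sum, ← Finset.mul_sum, hτdef]
  have hexp_dot : ∀ (g a : Fin n → ℝ) (μ : ℝ), (∑ i, g i * (a i - μ * t i))
      = (∑ i, g i * a i) - μ * (∑ i, g i * t i) := by
    intro g a μ
    have : ∀ i ∈ Finset.univ, g i * (a i - μ * t i)
        = g i * a i - μ * (g i * t i) := by
      intro i _; ring
    rw [Finset.sum_congr rfl this, Finset.sum_sub_distrib, ← Finset.mul_sum]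
  -- Bq at u0 = f0 - lam*g0*t
  have hBu0 : 0 ≤ 2*c*(p00 - lam*g0^2) - (p00 - lam*g0^2)^2 - (p01 - lam*g0*g1)^2 := by
    have hval : Bq (fun i => f0 i - (lam*g0) * t i)
        = 2*c*(p00 - lam*g0^2) - (p00 - lam*g0^2)^2 - (p01 - lam*g0*g1)^2 := by
      simp only [hBqdef]
      rw [hexp_sum f0 (lam*g0), hexp_sq f0 (lam*g0), hexp_dot t f0 (lam*g0),
        hexp_dot f0 f0 (lam*g0), hexp_dot f1 f0 (lam*g0), hSf0, hSt]
      have e1 : (∑ i, t i * f0 i) = g0 := by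
        rw [hg0def]; apply Finset.sum_congr rfl; intro i _; rw [mul_comm]
      have e2 : (∑ i, f0 i * f0 i) = p00 := by
        rw [hp00def]; apply Finset.sum_congr rfl; intro i _; rw [pow_two]
      have e3 : (∑ i, f1 i * f0 i) = p01 := by
        rw [hp01def]; apply Finset.sum_congr rfl; intro i _; rw [mul_comm]
      have e4 : (∑ i, t i * t i) = τ := by
        rw [hτdef]; apply Finset.sum_congr rfl; intro i _; rw [pow_two]
      have e5 : (∑ i, f0 i * t i) = g0 := hg0def.symm
      have e6 : (∑ i, (f0 i)^2) = p00 := hp00def.symm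
      have e7 : (∑ i, f1 i * t i) = g1 := hg1def.symm
      rw [e1, e2, e3, e4, e5, e6, e7]
      linear_combination (g0^2*(lam*τ - 1)) * hlam
    rw [← hval]
    exact hBnonneg _
  have hBu1 : 0 ≤ 2*c*(p11 - lam*g1^2) - (p11 - lam*g1^2)^2 - (p01 - lam*g0*g1)^2 := by
    have hval : Bq (fun i => f1 i - (lam*g1) * t i)
        = 2*c*(p11 - lam*g1^2) - (p11 - lam*g1^2)^2 - (p01 - lam*g0*g1)^2 := by
      simp only [hBqdef]
      rw [hexp_sum f1 (lam*g1), hexp_sq f1 (lam*g1), hexp_dot t f1 (lam*g1),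
        hexp_dot f0 f1 (lam*g1), hexp_dot f1 f1 (lam*g1), hSf1, hSt]
      have e1 : (∑ i, t i * f1 i) = g1 := by
        rw [hg1def]; apply Finset.sum_congr rfl; intro i _; rw [mul_comm]
      have e2 : (∑ i, f1 i * f1 i) = p11 := by
        rw [hp11def]; apply Finset.sum_congr rfl; intro i _; rw [pow_two]
      have e3 : (∑ i, f0 i * f1 i) = p01 := hp01def.symm
      have e4 : (∑ i, t i * t i) = τ := by
        rw [hτdef]; apply Finset.sum_congr rfl; intro i _; rw [pow_two]
      have e5 : (∑ i, f1 i * t i) = g1 := hg1def.symm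
      have e6 : (∑ i, (f1 i)^2) = p11 := hp11def.symm
      have e7 : (∑ i, f0 i * t i) = g0 := hg0def.symm
      rw [e1, e2, e3, e4, e5, e6, e7]
      linear_combination (g1^2*(lam*τ - 1)) * hlam
    rw [← hval]
    exact hBnonneg _
  -- Step A : τ*(2c+τ) ≤ g0^2 + g1^2
  have hstepA : τ * (2*c + τ) ≤ g0^2 + g1^2 := by
    set p : ℝ := p00 - lam*g0^2 with hpdef
    set q : ℝ := p11 - lam*g1^2 with hqdef
    set e : ℝ := p01 - lam*g0*g1 with hedef
    clear_value p q e
    have hsum4c : p + q ≤ 4*c := aux_quad hc hBu0 hBu1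
    have hpq : p + q = 4*c + τ - lam*(g0^2 + g1^2) := by
      rw [hpdef, hqdef]; linarith [hQ]
    have hlamG : τ ≤ lam * (g0^2 + g1^2) := by linarith
    calc τ * (2*c + τ) ≤ (lam * (g0^2 + g1^2)) * (2*c + τ) := by
          apply mul_le_mul_of_nonneg_right hlamG (le_of_lt hden)
      _ = (g0^2 + g1^2) * (lam * (2*c + τ)) := by ring
      _ = g0^2 + g1^2 := by rw [hlam]; ring
  -- combine : Bq t = 0, hence t ≡ 0
  have hBt0 : Bq t = 0 := by
    rw [hBt_val]
    nlinarith [hstepA, hBt]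
  have ht0 : ∀ i, t i = 0 := hBzero t hBt0 hSt
  have hτeq : τ = 0 := by
    rw [hτdef]
    apply Finset.sum_eq_zero; intro i _; rw [ht0 i]; ring
  have hg0eq : g0 = 0 := by
    rw [hg0def]
    apply Finset.sum_eq_zero; intro i _; rw [ht0 i]; ring
  have hg1eq : g1 = 0 := by
    rw [hg1def]
    apply Finset.sum_eq_zero; intro i _; rw [ht0 i]; ring
  -- now p00 + p11 = 4c with the two inequalities forces p00 = 2c, p01 = 0
  have hP0 : 0 ≤ 2*c*p00 - p00^2 - p01^2 := by
    have := hBu0; rw [hg0eq, hg1eq] at this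
    simpa using this
  have hP1 : 0 ≤ 2*c*p11 - p11^2 - p01^2 := by
    have := hBu1; rw [hg0eq, hg1eq] at this
    simpa using this
  have hQ' : p00 + p11 = 4*c := by rw [hτeq] at hQ; linarith
  have hkey := aux_key hP0 hP1 hQ'
  have hp002c : p00 = 2*c := hkey.1
  have hp010 : p01 = 0 := hkey.2
  -- final : Bq f0 = 0 forces f0 ≡ 0, contradicting p00 = 2c > 0
  have hBf0 : Bq f0 = 0 := by
    simp only [hBqdef]
    have e1 : (∑ i, t i * f0 i) = 0 := by
      apply Finset.sum_eq_zero; intro i _; rw [ht0 i]; ring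
    have e2 : (∑ i, f0 i * f0 i) = p00 := by
      rw [hp00def]; apply Finset.sum_congr rfl; intro i _; rw [pow_two]
    have e3 : (∑ i, f1 i * f0 i) = p01 := by
      rw [hp01def]; apply Finset.sum_congr rfl; intro i _; rw [mul_comm]
    rw [e1, e2, e3, hSf0]
    rw [show (∑ i, (f0 i)^2) = p00 from hp00def.symm]
    rw [hp002c, hp010]
    ring
  have hf00 : ∀ i, f0 i = 0 := hBzero f0 hBf0 hSf0
  have hp000 : p00 = 0 := by
    rw [hp00def]
    apply Finset.sum_eq_zero; intro i _; rw [hf00 i]; ring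
  rw [hp002c] at hp000
  linarith
end

section
/- Let n ≥ 3 and let w₁, …, wₙ ∈ ℝ² satisfy ∑ᵢ wᵢ = 0 and ∑ᵢ |wᵢ| = 2. Set zᵢ = |wᵢ| − 2/n and define the symmetric n×n matrix G by G_{ij} = ⟨wᵢ, wⱼ⟩ − zᵢ zⱼ. Then: (i) G has at most 2 positive eigenvalues; (ii) tr G = 4/n; (iii) G𝟏 = 0, where 𝟏 is the all-ones vector; and consequently (iv) the largest eigenvalue of G satisfies λ₁(G) ≥ 2/n. -/
open Matrix Finset

/-!
With `W` the `n × 2` matrix of the `wᵢ`, `G = WWᵀ − zzᵀ` has quadratic form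
`x ↦ |Wᵀx|² − ⟨z, x⟩²`, which is `≤ 0` on the kernel of `x ↦ Wᵀx`, a subspace of codimension
at most `2`. It is positive definite on the span of the eigenvectors with positive eigenvalues,
so this span meets the kernel trivially and has dimension at most `2`. Since `∑ wᵢ = 0` and
`∑ zᵢ = 0`, `G𝟏 = 0`; and `tr G = ∑ (|wᵢ|² − zᵢ²) = 4/n`. The eigenvalues therefore sum to `4/n`
with at most two of them positive, so the largest is at least `2/n`.
-/

namespace Matrix.IsHermitian

variable {n : Type*} [Fintype n] [DecidableEq n] {A : Matrix n n ℝ} (hA : A.IsHermitian)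

theorem dotProduct_mulVec_sum_eigenvectorBasis {ι : Type*} [Fintype ι] {e : ι → n}
    (he : Function.Injective e) (c : ι → ℝ) :
    (∑ k, c k • ⇑(hA.eigenvectorBasis (e k))) ⬝ᵥ (A *ᵥ ∑ k, c k • ⇑(hA.eigenvectorBasis (e k))) =
      ∑ k, hA.eigenvalues (e k) * c k ^ 2 := by
  set x := ∑ k, c k • ⇑(hA.eigenvectorBasis (e k))
  have hAx : A *ᵥ x = ∑ k, (hA.eigenvalues (e k) * c k) • ⇑(hA.eigenvectorBasis (e k)) := by
    simp only [x, mulVec_sum, mulVec_smul, hA.mulVec_eigenvectorBasis, smul_smul, mul_comm]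
  have hinner := (hA.eigenvectorBasis.orthonormal.comp e he).inner_sum
    (fun k => hA.eigenvalues (e k) * c k) c univ
  rw [EuclideanSpace.inner_eq_star_dotProduct] at hinner
  simp only [Function.comp_apply, WithLp.ofLp_sum, WithLp.ofLp_smul, star_trivial,
    conj_trivial] at hinner
  rw [hAx, hinner]
  exact sum_congr rfl fun k _ => by ring

theorem card_filter_eigenvalues_pos_le_finrank {V : Type*} [AddCommGroup V] [Module ℝ V]
    [FiniteDimensional ℝ V] (L : (n → ℝ) →ₗ[ℝ] V)
    (hL : ∀ x, L x = 0 → x ⬝ᵥ (A *ᵥ x) ≤ 0) :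
    #{i | 0 < hA.eigenvalues i} ≤ Module.finrank ℝ V := by
  set S : Finset n := {i | 0 < hA.eigenvalues i}
  by_contra! hlt
  let P := Fintype.linearCombination ℝ fun k : S => ⇑(hA.eigenvectorBasis k)
  obtain ⟨c, hc, hc0⟩ := Submodule.exists_mem_ne_zero_of_ne_bot
    (LinearMap.ker_ne_bot_of_finrank_lt (f := L ∘ₗ P) (by simpa using hlt))
  have hnonpos := hL (P c) hc
  rw [Fintype.linearCombination_apply,
    hA.dotProduct_mulVec_sum_eigenvectorBasis Subtype.val_injective] at hnonpos
  obtain ⟨k, hk : c k ≠ 0⟩ := Function.ne_iff.mp hc0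
  have hpos : 0 < ∑ k : S, hA.eigenvalues k * c k ^ 2 := by
    refine sum_pos' (fun l _ => ?_) ⟨k, mem_univ k, ?_⟩
    · have hlpos := (mem_filter.mp l.2).2
      positivity
    · have hkpos := (mem_filter.mp k.2).2
      positivity
  linarith

end Matrix.IsHermitian

theorem Finset.exists_sum_div_le_of_card_filter_pos_le {ι : Type*} [Fintype ι] [DecidableEq ι]
    {f : ι → ℝ} {m : ℕ} (hm : #{i | 0 < f i} ≤ m) (hsum : 0 < ∑ i, f i) :
    ∃ i, (∑ i, f i) / m ≤ f i := by
  by_contra! hlt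
  set P : Finset ι := {i | 0 < f i}
  have hP : P.Nonempty := by
    have : ∑ _i : ι, (0 : ℝ) < ∑ i, f i := by rwa [sum_const_zero]
    obtain ⟨i, -, hi⟩ := exists_lt_of_sum_lt this
    exact ⟨i, by simpa [P] using hi⟩
  have hm0 : (0 : ℝ) < m := by exact_mod_cast hP.card_pos.trans_le hm
  have := calc ∑ i, f i ≤ ∑ i, if 0 < f i then f i else 0 :=
        sum_le_sum fun i _ => by split_ifs <;> linarith
    _ = ∑ i ∈ P, f i := (sum_filter ..).symm
    _ < ∑ i ∈ P, (∑ i, f i) / m := sum_lt_sum_of_nonempty hP fun i _ => hlt i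
    _ ≤ ∑ i, f i := by
      rw [sum_const, nsmul_eq_mul, ← mul_div_assoc, div_le_iff₀ hm0, mul_comm]
      gcongr
  exact this.false

theorem Matrix.dotProduct_mulVec_mul_transpose_sub_vecMulVec {n m : Type*} [Fintype n]
    [Fintype m] (W : Matrix n m ℝ) (z x : n → ℝ) :
    x ⬝ᵥ ((W * Wᵀ - vecMulVec z z) *ᵥ x) = (x ᵥ* W) ⬝ᵥ (x ᵥ* W) - (z ⬝ᵥ x) ^ 2 := by
  rw [sub_mulVec, dotProduct_sub, ← mulVec_mulVec, dotProduct_mulVec, mulVec_transpose,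
    vecMulVec_mulVec, op_smul_eq_smul, dotProduct_smul, smul_eq_mul, dotProduct_comm x z, sq]

theorem Matrix.mul_transpose_sub_vecMulVec_mulVec_eq_zero {n m : Type*} [Fintype n] [Fintype m]
    {W : Matrix n m ℝ} {z x : n → ℝ} (hW : x ᵥ* W = 0) (hz : z ⬝ᵥ x = 0) :
    (W * Wᵀ - vecMulVec z z) *ᵥ x = 0 := by
  simp [sub_mulVec, ← mulVec_mulVec, mulVec_transpose, hW, vecMulVec_mulVec, hz]

theorem enorm2_sq (v : Fin 2 → ℝ) : enorm2 v ^ 2 = inner2 v v := by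
  rw [enorm2, Real.sq_sqrt (by positivity), inner2]
  ring

theorem G_matrix_properties_general (n : ℕ) (w : Fin n → Fin 2 → ℝ)
    (hsum : ∑ i, w i = 0) (hper : ∑ i, enorm2 (w i) = 2)
    (z : Fin n → ℝ) (hz : ∀ i, z i = enorm2 (w i) - 2 / n)
    (G : Matrix (Fin n) (Fin n) ℝ)
    (hGdef : ∀ i j, G i j = inner2 (w i) (w j) - z i * z j)
    (hG : G.IsHermitian) :
    (Finset.univ.filter (fun i : Fin n => 0 < hG.eigenvalues i)).card ≤ 2 ∧
    G.trace = 4 / n ∧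
    G *ᵥ (fun _ => 1) = 0 ∧
    ∃ i : Fin n, 2 / (n : ℝ) ≤ hG.eigenvalues i := by
  have hn : (0 : ℝ) < n := by
    rcases Nat.eq_zero_or_pos n with rfl | hn
    · simp at hper
    · exact_mod_cast hn
  have hGW : G = of w * (of w)ᵀ - vecMulVec z z := by
    ext i j
    simp [hGdef, inner2, mul_apply, Fin.sum_univ_two, vecMulVec_apply]
  have hzsum : ∑ i, z i = 0 := by
    simp only [hz, sum_sub_distrib, hper, sum_const, card_univ, Fintype.card_fin, nsmul_eq_mul]
    field_simp
    ring
  have htrace : G.trace = 4 / n := by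
    have hdiag : ∀ i, G i i = 4 / n * enorm2 (w i) - 4 / n ^ 2 := fun i => by
      rw [hGdef, hz, ← enorm2_sq]
      ring
    simp only [trace, Matrix.diag, hdiag, sum_sub_distrib, ← mul_sum, hper, sum_const, card_univ,
      Fintype.card_fin, nsmul_eq_mul]
    field_simp
    ring
  have hcard : #{i | 0 < hG.eigenvalues i} ≤ 2 := by
    refine (hG.card_filter_eigenvalues_pos_le_finrank (vecMulLinear (of w)) fun x hx => ?_).trans_eq
      (Module.finrank_fin_fun ℝ)
    rw [vecMulLinear_apply] at hx
    rw [hGW, dotProduct_mulVec_mul_transpose_sub_vecMulVec, hx, zero_dotProduct, zero_sub,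
      neg_nonpos]
    positivity
  refine ⟨hcard, htrace, ?_, ?_⟩
  · rw [hGW]
    refine mul_transpose_sub_vecMulVec_mulVec_eq_zero ?_ ((dotProduct_one z).trans hzsum)
    ext a
    simpa [vecMul, dotProduct, Finset.sum_apply] using congrFun hsum a
  · have htr : ∑ i, hG.eigenvalues i = 4 / n := by
      simpa [hG.trace_eq_sum_eigenvalues] using htrace
    obtain ⟨i, hi⟩ := exists_sum_div_le_of_card_filter_pos_le hcard (by rw [htr]; positivity)
    exact ⟨i, by rw [htr] at hi; linarith [show (4 : ℝ) / n / 2 = 2 / n by ring]⟩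

/-- properties of the matrix `G = WWᵀ − zzᵀ`. -/
theorem G_matrix_properties (n : ℕ) (hn : 3 ≤ n) (w : Fin n → Fin 2 → ℝ)
    (hsum : ∑ i, w i = 0) (hper : ∑ i, enorm2 (w i) = 2)
    (z : Fin n → ℝ) (hz : ∀ i, z i = enorm2 (w i) - 2 / n)
    (G : Matrix (Fin n) (Fin n) ℝ)
    (hGdef : ∀ i j, G i j = inner2 (w i) (w j) - z i * z j)
    (hG : G.IsHermitian) :
    (Finset.univ.filter (fun i : Fin n => 0 < hG.eigenvalues i)).card ≤ 2 ∧
    G.trace = 4 / n ∧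
    G *ᵥ (fun _ => 1) = 0 ∧
    ∃ i : Fin n, 2 / (n : ℝ) ≤ hG.eigenvalues i :=
  G_matrix_properties_general n w hsum hper z hz G hGdef hG
end
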